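/- arXiv:2110.12920 — 8 statements merged into one kernel-verified Lean document; each statement's English description precedes it below -/
import Mathlib

section
/- Consider the metric measure space X = ℝ with the Euclidean metric and a Borel measure μ such that every open ball (i.e., open bounded interval) has finite and strictly positive measure. Then the noncentered Hardy–Littlewood maximal operator M̃ possesses the dichotomy property: for every f locally integrable with respect to μ, if M̃f(x₀) < ∞ for some point x₀ ∈ ℝ, then M̃f(x) < ∞ for μ-almost every x ∈ ℝ. -/
open MeasureTheory
open scoped ENNReal

/-- The noncentered Hardy–Littlewood maximal function of `f` with respect to `μ`. -/
noncomputable def maxN (μ : Measure ℝ) (f : ℝ → ℝ) (x : ℝ) : ℝ≥0∞ :=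
  ⨆ (z : ℝ) (s : ℝ) (_ : x ∈ Metric.ball z s),
    (μ (Metric.ball z s))⁻¹ * ∫⁻ y in Metric.ball z s, ENNReal.ofReal |f y| ∂μ

private lemma key_mid {a₁ b₁ a₃ b₃ x : ℝ} {a₂ b₂ : ℝ}
    (h1 : x ∈ Set.Ioo a₁ b₁) (h3 : x ∈ Set.Ioo a₃ b₃)
    (ha : a₁ ≤ a₂) (hb : b₂ ≤ b₃) :
    Set.Ioo a₂ b₂ ⊆ Set.Ioo a₁ b₁ ∪ Set.Ioo a₃ b₃ := by
  intro y hy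
  by_cases hyb : y < b₁
  · exact Or.inl ⟨lt_of_le_of_lt ha hy.1, hyb⟩
  · exact Or.inr ⟨h3.1.trans (h1.2.trans_le (not_lt.1 hyb)), hy.2.trans_le hb⟩

private lemma three_balls (p q r : ℝ × ℝ) (x : ℝ)
    (hp : x ∈ Metric.ball p.1 p.2) (hq : x ∈ Metric.ball q.1 q.2)
    (hr : x ∈ Metric.ball r.1 r.2) :
    Metric.ball p.1 p.2 ⊆ Metric.ball q.1 q.2 ∪ Metric.ball r.1 r.2 ∨
    Metric.ball q.1 q.2 ⊆ Metric.ball p.1 p.2 ∪ Metric.ball r.1 r.2 ∨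
    Metric.ball r.1 r.2 ⊆ Metric.ball p.1 p.2 ∪ Metric.ball q.1 q.2 := by
  have comm' : ∀ {s t u : Set ℝ}, s ⊆ t ∪ u → s ⊆ u ∪ t := by
    intro s t u h y hy
    rcases h hy with h' | h'
    · exact Or.inr h'
    · exact Or.inl h'
  rw [Real.ball_eq_Ioo] at hp hq hr
  rw [Real.ball_eq_Ioo p.1 p.2, Real.ball_eq_Ioo q.1 q.2, Real.ball_eq_Ioo r.1 r.2]
  rcases le_total (p.1 - p.2) (q.1 - q.2) with hpq | hqp
  · rcases le_total (p.1 - p.2) (r.1 - r.2) with hpr | hrp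
    · -- p has min left endpoint
      rcases le_total (q.1 + q.2) (r.1 + r.2) with h | h
      · exact Or.inr (Or.inl (key_mid hp hr hpq h))
      · exact Or.inr (Or.inr (key_mid hp hq hpr h))
    · -- r min (r ≤ p ≤ q)
      rcases le_total (p.1 + p.2) (q.1 + q.2) with h | h
      · exact Or.inl (comm' (key_mid hr hq hrp h))
      · exact Or.inr (Or.inl (comm' (key_mid hr hp (hrp.trans hpq) h)))
  · rcases le_total (q.1 - q.2) (r.1 - r.2) with hqr | hrq
    · -- q min
      rcases le_total (p.1 + p.2) (r.1 + r.2) with h | h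
      · exact Or.inl (key_mid hq hr hqp h)
      · exact Or.inr (Or.inr (comm' (key_mid hq hp hqr h)))
    · -- r min (r ≤ q ≤ p)
      rcases le_total (p.1 + p.2) (q.1 + q.2) with h | h
      · exact Or.inl (comm' (key_mid hr hq (hrq.trans hqp) h))
      · exact Or.inr (Or.inl (comm' (key_mid hr hp hrq h)))

private lemma cov (F : Finset (ℝ × ℝ)) :
    ∃ G ⊆ F, (⋃ p ∈ F, Metric.ball p.1 p.2) ⊆ (⋃ p ∈ G, Metric.ball p.1 p.2) ∧
      ∀ x : ℝ, ∑ p ∈ G, (Metric.ball p.1 p.2).indicator (fun _ => (1 : ℝ≥0∞)) x ≤ 2 := by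
  classical
  induction F using Finset.strongInduction with
  | _ F ih =>
    by_cases h2 : ∀ x : ℝ,
        ∑ p ∈ F, (Metric.ball p.1 p.2).indicator (fun _ => (1 : ℝ≥0∞)) x ≤ 2
    · exact ⟨F, Finset.Subset.refl F, subset_rfl, h2⟩
    · push_neg at h2
      obtain ⟨x, hx⟩ := h2
      have hsum : ∑ p ∈ F, (Metric.ball p.1 p.2).indicator (fun _ => (1 : ℝ≥0∞)) x
          = ((F.filter (fun p => x ∈ Metric.ball p.1 p.2)).card : ℝ≥0∞) := by
        rw [Finset.sum_indicator_eq_sum_filter]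
        simp
      have hcard : 3 ≤ (F.filter (fun p => x ∈ Metric.ball p.1 p.2)).card := by
        rw [hsum] at hx
        exact_mod_cast hx
      obtain ⟨u, hu, hucard⟩ :=
        Finset.exists_subset_card_eq (s := F.filter (fun p => x ∈ Metric.ball p.1 p.2)) hcard
      obtain ⟨p, q, r, hpq, hpr, hqr, rfl⟩ := Finset.card_eq_three.1 hucard
      have hpmem := hu (by simp : p ∈ ({p, q, r} : Finset (ℝ × ℝ)))
      have hqmem := hu (by simp : q ∈ ({p, q, r} : Finset (ℝ × ℝ)))
      have hrmem := hu (by simp : r ∈ ({p, q, r} : Finset (ℝ × ℝ)))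
      have hpF := (Finset.mem_filter.1 hpmem).1
      have hqF := (Finset.mem_filter.1 hqmem).1
      have hrF := (Finset.mem_filter.1 hrmem).1
      have hxp := (Finset.mem_filter.1 hpmem).2
      have hxq := (Finset.mem_filter.1 hqmem).2
      have hxr := (Finset.mem_filter.1 hrmem).2
      have main : ∀ i j k : ℝ × ℝ, i ∈ F → j ∈ F → k ∈ F → j ≠ i → k ≠ i →
          Metric.ball i.1 i.2 ⊆ Metric.ball j.1 j.2 ∪ Metric.ball k.1 k.2 →
          ∃ G ⊆ F, (⋃ p ∈ F, Metric.ball p.1 p.2) ⊆ (⋃ p ∈ G, Metric.ball p.1 p.2) ∧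
            ∀ x : ℝ, ∑ p ∈ G, (Metric.ball p.1 p.2).indicator (fun _ => (1 : ℝ≥0∞)) x ≤ 2 := by
        intro i j k hiF hjF hkF hji hki hsub
        obtain ⟨G, hGsub, hGcov, hGmul⟩ := ih (F.erase i) (Finset.erase_ssubset hiF)
        refine ⟨G, hGsub.trans (Finset.erase_subset _ _), ?_, hGmul⟩
        refine Set.iUnion₂_subset fun p' hp' => ?_
        intro y hy
        by_cases hpi : p' = i
        · subst hpi
          rcases hsub hy with h | h
          · exact hGcov (Set.mem_biUnion (Finset.mem_erase.2 ⟨hji, hjF⟩) h)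
          · exact hGcov (Set.mem_biUnion (Finset.mem_erase.2 ⟨hki, hkF⟩) h)
        · exact hGcov (Set.mem_biUnion (Finset.mem_erase.2 ⟨hpi, hp'⟩) hy)
      rcases three_balls p q r x hxp hxq hxr with h | h | h
      · exact main p q r hpF hqF hrF (Ne.symm hpq) (Ne.symm hpr) h
      · exact main q p r hqF hpF hrF hpq (Ne.symm hqr) h
      · exact main r p q hrF hpF hqF hpr hqr h

private lemma sum_balls_le (μ : Measure ℝ) (g : ℝ → ℝ≥0∞) (hg : AEMeasurable g μ)
    (G : Finset (ℝ × ℝ))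
    (hG : ∀ x : ℝ, ∑ p ∈ G, (Metric.ball p.1 p.2).indicator (fun _ => (1 : ℝ≥0∞)) x ≤ 2) :
    ∑ p ∈ G, ∫⁻ y in Metric.ball p.1 p.2, g y ∂μ ≤ 2 * ∫⁻ y, g y ∂μ := by
  have h1 : ∀ p : ℝ × ℝ, ∫⁻ y in Metric.ball p.1 p.2, g y ∂μ
      = ∫⁻ y, (Metric.ball p.1 p.2).indicator g y ∂μ := fun p =>
    (lintegral_indicator measurableSet_ball g).symm
  have hpt : ∀ y : ℝ, ∑ p ∈ G, (Metric.ball p.1 p.2).indicator g y ≤ 2 * g y := by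
    intro y
    have heach : ∀ p : ℝ × ℝ, (Metric.ball p.1 p.2).indicator g y
        = ((Metric.ball p.1 p.2).indicator (fun _ => (1 : ℝ≥0∞)) y) * g y := by
      intro p
      by_cases h : y ∈ Metric.ball p.1 p.2 <;> simp [Set.indicator_apply, h]
    rw [Finset.sum_congr rfl (fun p _ => heach p), ← Finset.sum_mul]
    exact mul_le_mul_left (hG y) _
  calc ∑ p ∈ G, ∫⁻ y in Metric.ball p.1 p.2, g y ∂μ
      = ∫⁻ y, ∑ p ∈ G, (Metric.ball p.1 p.2).indicator g y ∂μ := by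
        simp_rw [h1]
        exact (lintegral_finset_sum' G fun p _ => hg.indicator measurableSet_ball).symm
    _ ≤ ∫⁻ y, 2 * g y ∂μ := lintegral_mono hpt
    _ = 2 * ∫⁻ y, g y ∂μ := lintegral_const_mul' 2 g (by norm_num)

private lemma le_maxN (μ : Measure ℝ) (f : ℝ → ℝ) {x z s : ℝ} (h : x ∈ Metric.ball z s) :
    (μ (Metric.ball z s))⁻¹ * ∫⁻ y in Metric.ball z s, ENNReal.ofReal |f y| ∂μ
      ≤ maxN μ f x :=
  le_iSup_of_le z (le_iSup_of_le s (le_iSup_of_le h le_rfl))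

private lemma isOpen_maxN_gt (μ : Measure ℝ) (f : ℝ → ℝ) (L : ℝ≥0∞) :
    IsOpen {x : ℝ | L < maxN μ f x} := by
  rw [isOpen_iff_mem_nhds]
  intro x hx
  simp only [Set.mem_setOf_eq, maxN, lt_iSup_iff] at hx
  obtain ⟨z, s, hm, hlt⟩ := hx
  refine Filter.mem_of_superset (Metric.isOpen_ball.mem_nhds hm) ?_
  intro y hy
  simp only [Set.mem_setOf_eq, maxN, lt_iSup_iff]
  exact ⟨z, s, hy, hlt⟩

private lemma alg_bound {μB νB M K c mI : ℝ≥0∞} (hB0 : μB ≠ 0) (hBt : μB ≠ ⊤)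
    (hν : νB ≤ M * (K + mI)) (hc : c ≤ mI) (hmB : mI ≤ μB) :
    μB⁻¹ * νB ≤ M + M * (K * c⁻¹) := by
  have hinv : μB⁻¹ ≤ c⁻¹ := ENNReal.inv_le_inv' (hc.trans hmB)
  calc μB⁻¹ * νB ≤ μB⁻¹ * (M * (K + mI)) := mul_le_mul_right hν _
    _ = M * (μB⁻¹ * K) + M * (μB⁻¹ * mI) := by ring
    _ ≤ M * (c⁻¹ * K) + M * 1 := by
        refine add_le_add (mul_le_mul_right (mul_le_mul_left hinv K) M)
          (mul_le_mul_right ?_ M)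
        calc μB⁻¹ * mI ≤ μB⁻¹ * μB := mul_le_mul_right hmB _
          _ = 1 := ENNReal.inv_mul_cancel hB0 hBt
    _ = M + M * (K * c⁻¹) := by rw [mul_one, mul_comm c⁻¹ K, add_comm]

theorem stmt_5 (μ : Measure ℝ)
    (hμ : ∀ (z s : ℝ), 0 < s → 0 < μ (Metric.ball z s) ∧ μ (Metric.ball z s) < ⊤)
    (f : ℝ → ℝ) (hf : ∀ (z s : ℝ), IntegrableOn f (Metric.ball z s) μ)
    (x₀ : ℝ) (h₀ : maxN μ f x₀ < ⊤) :
    ∀ᵐ x ∂μ, maxN μ f x < ⊤ := by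
  classical
  have hMne : maxN μ f x₀ ≠ ⊤ := h₀.ne
  set M := maxN μ f x₀ with hMdef
  have hfm : AEStronglyMeasurable f μ := by
    have huniv : (Set.univ : Set ℝ) = ⋃ n : ℕ, Metric.ball x₀ n := by
      ext y
      simp only [Set.mem_univ, true_iff, Set.mem_iUnion, Metric.mem_ball]
      obtain ⟨n, hn⟩ := exists_nat_gt (dist y x₀)
      exact ⟨n, hn⟩
    have h := (aestronglyMeasurable_iUnion_iff (μ := μ)
        (s := fun n : ℕ => Metric.ball x₀ n) (f := f)).2
      (fun n => (hf x₀ n).aestronglyMeasurable)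
    rwa [← huniv, Measure.restrict_univ] at h
  have hg : AEMeasurable (fun y => ENNReal.ofReal |f y|) μ := by
    simp_rw [← Real.enorm_eq_ofReal_abs]
    exact hfm.enorm
  rw [MeasureTheory.ae_iff]
  have hsub : {x | ¬ maxN μ f x < ⊤} ⊆
      ⋃ n : ℕ, ({x | maxN μ f x = ⊤} ∩ Metric.ball x₀ ((n : ℝ) + 1)) := by
    intro x hx
    obtain ⟨n, hn⟩ := exists_nat_gt (dist x x₀)
    refine Set.mem_iUnion.2 ⟨n, ⟨top_le_iff.1 (not_lt.1 hx), Metric.mem_ball.2 ?_⟩⟩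
    exact hn.trans (by linarith)
  refine measure_mono_null hsub (measure_iUnion_null fun n => ?_)
  set r : ℝ := (n : ℝ) + 1 with hrdef
  have hr0 : 0 < r := by positivity
  set f₁ : ℝ → ℝ := (Metric.ball x₀ (3 * r)).indicator f with hf₁
  have hg1eq : (fun y => ENNReal.ofReal |f₁ y|)
      = (Metric.ball x₀ (3 * r)).indicator (fun y => ENNReal.ofReal |f y|) := by
    funext y
    by_cases h : y ∈ Metric.ball x₀ (3 * r) <;>
      simp [hf₁, Set.indicator_apply, h]
  have hg1 : AEMeasurable (fun y => ENNReal.ofReal |f₁ y|) μ := by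
    rw [hg1eq]; exact hg.indicator measurableSet_ball
  set A : ℝ≥0∞ := ∫⁻ y, ENNReal.ofReal |f₁ y| ∂μ with hAdef
  have hAne : A ≠ ⊤ := by
    have h1 : A = ∫⁻ y in Metric.ball x₀ (3 * r), ENNReal.ofReal |f y| ∂μ := by
      rw [hAdef, hg1eq, lintegral_indicator measurableSet_ball]
    rw [h1]
    exact ((hf x₀ (3 * r)).abs.lintegral_lt_top).ne
  have h2Ane : 2 * A ≠ ⊤ := ENNReal.mul_ne_top (by norm_num) hAne
  -- constants
  obtain ⟨hK0, hKt⟩ := hμ x₀ r hr0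
  set K : ℝ≥0∞ := μ (Metric.ball x₀ r) with hKdef
  set c : ℝ≥0∞ := μ (Metric.ball (x₀ + 3 * r / 2) (r / 2)) ⊓
      μ (Metric.ball (x₀ - 3 * r / 2) (r / 2)) with hcdef
  have hc0 : c ≠ 0 := by
    have h1 := (hμ (x₀ + 3 * r / 2) (r / 2) (by positivity)).1
    have h2 := (hμ (x₀ - 3 * r / 2) (r / 2) (by positivity)).1
    rw [hcdef]
    exact (lt_min h1 h2).ne'
  set C : ℝ≥0∞ := M + M * (1 + K * c⁻¹) with hCdef
  have hCne : C ≠ ⊤ := by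
    refine ENNReal.add_ne_top.2 ⟨hMne, ENNReal.mul_ne_top hMne (ENNReal.add_ne_top.2
      ⟨ENNReal.one_ne_top, ENNReal.mul_ne_top hKt.ne (ENNReal.inv_ne_top.2 hc0)⟩)⟩
  -- the key pointwise bound
  have hbound : ∀ x ∈ Metric.ball x₀ r, maxN μ f x ≤ C + maxN μ f₁ x := by
    intro x hxr
    refine iSup_le fun z => iSup_le fun s => iSup_le fun hxz => ?_
    have hs0 : 0 < s := Metric.pos_of_mem_ball hxz
    obtain ⟨hB0, hBt⟩ := hμ z s hs0
    have hxIoo : x ∈ Set.Ioo (z - s) (z + s) := by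
      rw [← Real.ball_eq_Ioo]; exact hxz
    have hxr' : x ∈ Set.Ioo (x₀ - r) (x₀ + r) := by
      rw [← Real.ball_eq_Ioo]; exact hxr
    by_cases hx₀B : x₀ ∈ Metric.ball z s
    · refine le_trans (le_maxN μ f hx₀B) ?_
      exact le_trans le_self_add le_self_add
    · by_cases hBsub : Metric.ball z s ⊆ Metric.ball x₀ (3 * r)
      · have heq : ∫⁻ y in Metric.ball z s, ENNReal.ofReal |f y| ∂μ
            = ∫⁻ y in Metric.ball z s, ENNReal.ofReal |f₁ y| ∂μ := by
          refine setLIntegral_congr_fun_ae measurableSet_ball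
            (Filter.Eventually.of_forall fun y hy => ?_)
          rw [hf₁, Set.indicator_of_mem (hBsub hy)]
        rw [heq]
        exact le_trans (le_maxN μ f₁ hxz) le_add_self
      · have hx₀I : x₀ ∉ Set.Ioo (z - s) (z + s) := by
          rw [← Real.ball_eq_Ioo]; exact hx₀B
        have hab : z - s < z + s := hxIoo.1.trans hxIoo.2
        have hnotsub : ¬ (Set.Ioo (z - s) (z + s) ⊆ Set.Ioo (x₀ - 3 * r) (x₀ + 3 * r)) := by
          rw [← Real.ball_eq_Ioo, ← Real.ball_eq_Ioo]; exact hBsub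
        have hfinal : (μ (Metric.ball z s))⁻¹ *
            (∫⁻ y in Metric.ball z s, ENNReal.ofReal |f y| ∂μ) ≤ M + M * (K * c⁻¹) := by
          rcases le_or_gt x₀ (z - s) with hA1 | hA1
          · -- interval to the right of x₀
            have hb3 : x₀ + 3 * r < z + s := by
              by_contra hle
              push_neg at hle
              exact hnotsub ((Set.Ioo_subset_Ioo_iff hab).2 ⟨by linarith, hle⟩)
            set zD : ℝ := ((x₀ - r) + (z + s)) / 2 with hzD
            set sD : ℝ := ((z + s) - (x₀ - r)) / 2 with hsD
            have hDball : Metric.ball zD sD = Set.Ioo (x₀ - r) (z + s) := by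
              rw [Real.ball_eq_Ioo]
              congr 1 <;> (rw [hzD, hsD]; ring)
            have hsD0 : 0 < sD := by rw [hsD]; linarith
            have hx₀D : x₀ ∈ Metric.ball zD sD := by
              rw [hDball]; exact ⟨by linarith, by linarith⟩
            obtain ⟨hD0, hDt⟩ := hμ zD sD hsD0
            have hνD : (∫⁻ y in Metric.ball zD sD, ENNReal.ofReal |f y| ∂μ)
                ≤ M * μ (Metric.ball zD sD) := by
              have h := le_maxN μ f hx₀D
              have h2 := mul_le_mul_right h (μ (Metric.ball zD sD))
              rwa [← mul_assoc, ENNReal.mul_inv_cancel hD0.ne' hDt.ne, one_mul,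
                mul_comm] at h2
            have hBD : Metric.ball z s ⊆ Metric.ball zD sD := by
              rw [hDball, Real.ball_eq_Ioo]
              exact Set.Ioo_subset_Ioo (by linarith) le_rfl
            have hνB : (∫⁻ y in Metric.ball z s, ENNReal.ofReal |f y| ∂μ)
                ≤ M * (K + μ (Set.Ico (x₀ + r) (z + s))) := by
              refine le_trans (lintegral_mono_set hBD) (hνD.trans ?_)
              refine mul_le_mul_right ?_ M
              have hsplit : Metric.ball zD sD ⊆
                  Metric.ball x₀ r ∪ Set.Ico (x₀ + r) (z + s) := by
                rw [hDball, Real.ball_eq_Ioo]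
                intro y hy
                by_cases hc' : y < x₀ + r
                · exact Or.inl ⟨hy.1, hc'⟩
                · exact Or.inr ⟨not_lt.1 hc', hy.2⟩
              exact le_trans (measure_mono hsplit) (measure_union_le _ _)
            have hIcoB : Set.Ico (x₀ + r) (z + s) ⊆ Metric.ball z s := by
              rw [Real.ball_eq_Ioo]
              intro y hy
              exact ⟨by linarith [hy.1, hxIoo.1, hxr'.2], hy.2⟩
            have hcIco : c ≤ μ (Set.Ico (x₀ + r) (z + s)) := by
              refine le_trans inf_le_left (measure_mono ?_)
              rw [Real.ball_eq_Ioo]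
              intro y hy
              refine ⟨by linarith [hy.1], by linarith [hy.2]⟩
            exact alg_bound hB0.ne' hBt.ne hνB hcIco (measure_mono hIcoB)
          · -- interval to the left of x₀
            have hB1 : z + s ≤ x₀ := by
              by_contra hlt
              push_neg at hlt
              exact hx₀I ⟨hA1, hlt⟩
            have ha3 : z - s < x₀ - 3 * r := by
              by_contra hle
              push_neg at hle
              exact hnotsub ((Set.Ioo_subset_Ioo_iff hab).2 ⟨hle, by linarith⟩)
            set zD : ℝ := ((z - s) + (x₀ + r)) / 2 with hzD
            set sD : ℝ := ((x₀ + r) - (z - s)) / 2 with hsD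
            have hDball : Metric.ball zD sD = Set.Ioo (z - s) (x₀ + r) := by
              rw [Real.ball_eq_Ioo]
              congr 1 <;> (rw [hzD, hsD]; ring)
            have hsD0 : 0 < sD := by rw [hsD]; linarith
            have hx₀D : x₀ ∈ Metric.ball zD sD := by
              rw [hDball]; exact ⟨by linarith, by linarith⟩
            obtain ⟨hD0, hDt⟩ := hμ zD sD hsD0
            have hνD : (∫⁻ y in Metric.ball zD sD, ENNReal.ofReal |f y| ∂μ)
                ≤ M * μ (Metric.ball zD sD) := by
              have h := le_maxN μ f hx₀D
              have h2 := mul_le_mul_right h (μ (Metric.ball zD sD))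
              rwa [← mul_assoc, ENNReal.mul_inv_cancel hD0.ne' hDt.ne, one_mul,
                mul_comm] at h2
            have hBD : Metric.ball z s ⊆ Metric.ball zD sD := by
              rw [hDball, Real.ball_eq_Ioo]
              exact Set.Ioo_subset_Ioo le_rfl (by linarith)
            have hνB : (∫⁻ y in Metric.ball z s, ENNReal.ofReal |f y| ∂μ)
                ≤ M * (K + μ (Set.Ioc (z - s) (x₀ - r))) := by
              refine le_trans (lintegral_mono_set hBD) (hνD.trans ?_)
              refine mul_le_mul_right ?_ M
              have hsplit : Metric.ball zD sD ⊆
                  Metric.ball x₀ r ∪ Set.Ioc (z - s) (x₀ - r) := by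
                rw [hDball, Real.ball_eq_Ioo]
                intro y hy
                by_cases hc' : x₀ - r < y
                · exact Or.inl ⟨hc', hy.2⟩
                · exact Or.inr ⟨hy.1, not_lt.1 hc'⟩
              exact le_trans (measure_mono hsplit) (measure_union_le _ _)
            have hIocB : Set.Ioc (z - s) (x₀ - r) ⊆ Metric.ball z s := by
              rw [Real.ball_eq_Ioo]
              intro y hy
              exact ⟨hy.1, by linarith [hy.2, hxr'.1, hxIoo.2]⟩
            have hcIoc : c ≤ μ (Set.Ioc (z - s) (x₀ - r)) := by
              refine le_trans inf_le_right (measure_mono ?_)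
              rw [Real.ball_eq_Ioo]
              intro y hy
              refine ⟨by linarith [hy.1], by linarith [hy.2]⟩
            exact alg_bound hB0.ne' hBt.ne hνB hcIoc (measure_mono hIocB)
        refine le_trans hfinal ?_
        refine le_trans ?_ (le_self_add : C ≤ C + maxN μ f₁ x)
        rw [hCdef]
        exact add_le_add_right (mul_le_mul_right le_add_self M) M
  -- weak type estimate
  have hweak : ∀ k : ℕ,
      μ ({x | (k : ℝ≥0∞) < maxN μ f₁ x} ∩ Metric.ball x₀ r) * k ≤ 2 * A := by
    intro k
    rcases Nat.eq_zero_or_pos k with rfl | hk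
    · simp
    set V := {x | (k : ℝ≥0∞) < maxN μ f₁ x} ∩ Metric.ball x₀ r with hV
    have hVopen : IsOpen V := (isOpen_maxN_gt μ f₁ _).inter Metric.isOpen_ball
    have hk0 : (k : ℝ≥0∞) ≠ 0 := by exact_mod_cast hk.ne'
    have hkt : (k : ℝ≥0∞) ≠ ⊤ := ENNReal.natCast_ne_top k
    have hcompact : ∀ Kc : Set ℝ, IsCompact Kc → Kc ⊆ V → μ Kc * k ≤ 2 * A := by
      intro Kc hKc hKcV
      have hw : ∀ x ∈ Kc, ∃ z s : ℝ, x ∈ Metric.ball z s ∧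
          (k : ℝ≥0∞) < (μ (Metric.ball z s))⁻¹ *
            ∫⁻ y in Metric.ball z s, ENNReal.ofReal |f₁ y| ∂μ := by
        intro x hx
        have h := (hKcV hx).1
        simp only [Set.mem_setOf_eq, maxN, lt_iSup_iff] at h
        obtain ⟨z, s, hm, hlt⟩ := h
        exact ⟨z, s, hm, hlt⟩
      choose! zf sf hmem hlt using hw
      obtain ⟨t, ht⟩ := hKc.elim_finite_subcover
        (fun i : {a // a ∈ Kc} => Metric.ball (zf i.1) (sf i.1))
        (fun i => Metric.isOpen_ball)
        (fun x hx => Set.mem_iUnion.2 ⟨⟨x, hx⟩, hmem x hx⟩)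
      set F : Finset (ℝ × ℝ) := t.image (fun i => (zf i.1, sf i.1)) with hF
      obtain ⟨G, hGF, hGcov, hGmul⟩ := cov F
      have hKF : Kc ⊆ ⋃ p ∈ F, Metric.ball p.1 p.2 := by
        intro x hx
        obtain ⟨i, hit, hxi⟩ := Set.mem_iUnion₂.1 (ht hx)
        exact Set.mem_biUnion (Finset.mem_image_of_mem _ hit) hxi
      have hμK : μ Kc ≤ ∑ p ∈ G, μ (Metric.ball p.1 p.2) :=
        le_trans (measure_mono (hKF.trans hGcov)) (measure_biUnion_finset_le G _)
      have hterm : ∀ p ∈ G, μ (Metric.ball p.1 p.2) * k ≤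
          ∫⁻ y in Metric.ball p.1 p.2, ENNReal.ofReal |f₁ y| ∂μ := by
        intro p hp
        obtain ⟨i, hit, rfl⟩ := Finset.mem_image.1 (hGF hp)
        have h1 := hlt i.1 i.2
        have hm := hmem i.1 i.2
        have hs0 : 0 < sf i.1 := Metric.pos_of_mem_ball hm
        obtain ⟨hB0, hBt⟩ := hμ (zf i.1) (sf i.1) hs0
        have h2 := mul_le_mul_right h1.le (μ (Metric.ball (zf i.1) (sf i.1)))
        rw [← mul_assoc, ENNReal.mul_inv_cancel hB0.ne' hBt.ne, one_mul] at h2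
        exact h2
      calc μ Kc * k ≤ (∑ p ∈ G, μ (Metric.ball p.1 p.2)) * k := mul_le_mul_left hμK _
        _ = ∑ p ∈ G, μ (Metric.ball p.1 p.2) * k := Finset.sum_mul _ _ _
        _ ≤ ∑ p ∈ G, ∫⁻ y in Metric.ball p.1 p.2, ENNReal.ofReal |f₁ y| ∂μ :=
            Finset.sum_le_sum hterm
        _ ≤ 2 * A := sum_balls_le μ _ hg1 G hGmul
    haveI : IsLocallyFiniteMeasure μ := by
      constructor
      intro x
      exact ⟨Metric.ball x 1, Metric.ball_mem_nhds x one_pos, (hμ x 1 one_pos).2⟩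
    by_contra hcon
    push_neg at hcon
    have hdiv : 2 * A / k < μ V := by
      rw [ENNReal.div_lt_iff (Or.inl hk0) (Or.inl hkt)]
      exact hcon
    obtain ⟨Kc, hKcV, hKcc, hKcgt⟩ :=
      MeasureTheory.Measure.Regular.innerRegular hVopen _ hdiv
    rw [ENNReal.div_lt_iff (Or.inl hk0) (Or.inl hkt)] at hKcgt
    exact absurd (lt_of_lt_of_le hKcgt (hcompact Kc hKcc hKcV)) (lt_irrefl _)
  -- conclude
  have hTsub : {x | maxN μ f x = ⊤} ∩ Metric.ball x₀ r ⊆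
      {x | maxN μ f₁ x = ⊤} ∩ Metric.ball x₀ r := by
    rintro x ⟨hx1, hx2⟩
    refine ⟨?_, hx2⟩
    by_contra hne
    have h1 := hbound x hx2
    rw [Set.mem_setOf_eq] at hx1
    rw [hx1] at h1
    exact absurd (lt_of_le_of_lt h1 (ENNReal.add_lt_top.2
      ⟨hCne.lt_top, lt_top_iff_ne_top.2 hne⟩)) (lt_irrefl _)
  refine measure_mono_null hTsub ?_
  set S := {x | maxN μ f₁ x = ⊤} ∩ Metric.ball x₀ r with hS
  by_contra hS0
  obtain ⟨m, hminv⟩ := ENNReal.exists_inv_nat_lt hS0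
  obtain ⟨j, hj⟩ := ENNReal.exists_nat_gt h2Ane
  have hm0 : (m : ℝ≥0∞) ≠ 0 := by
    intro h
    rw [h] at hminv
    simp only [ENNReal.inv_zero] at hminv
    exact not_top_lt hminv
  have hSV : ∀ k : ℕ, S ⊆ {x | (k : ℝ≥0∞) < maxN μ f₁ x} ∩ Metric.ball x₀ r := by
    intro k
    rintro x ⟨hx1, hx2⟩
    rw [Set.mem_setOf_eq] at hx1
    exact ⟨by rw [Set.mem_setOf_eq, hx1]; exact lt_top_iff_ne_top.2 (ENNReal.natCast_ne_top k), hx2⟩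
  have hle : ∀ k : ℕ, μ S * k ≤ 2 * A := fun k =>
    le_trans (mul_le_mul_left (measure_mono (hSV k)) _) (hweak k)
  have hjle : (j : ℝ≥0∞) ≤ μ S * (m * j : ℕ) := by
    push_cast
    calc (j : ℝ≥0∞) = ((m : ℝ≥0∞)⁻¹ * m) * j := by
          rw [ENNReal.inv_mul_cancel hm0 (ENNReal.natCast_ne_top m), one_mul]
      _ ≤ (μ S * m) * j := by
          exact mul_le_mul_left (mul_le_mul_left hminv.le m) j
      _ = μ S * (m * j) := by ring
  exact absurd (lt_of_lt_of_le hj (le_trans hjle (hle (m * j)))) (lt_irrefl _)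
end

section
/- Let d ≥ 1 and consider X = ℝ^d with the Euclidean metric d_e and a Borel measure μ such that every open ball has finite and strictly positive measure. Suppose limsup_{r → ∞} μ(B_{r+1}(y₀))/μ(B_r(y₀)) < ∞ for some y₀ ∈ ℝ^d. Then the centered Hardy–Littlewood maximal operator M possesses the dichotomy property: for every locally μ-integrable f, if Mf(x₀) < ∞ for some x₀, then Mf(x) < ∞ for μ-almost every x. -/
open MeasureTheory
open scoped ENNReal

/-- The centered Hardy–Littlewood maximal function of `f` with respect to `μ`. -/
noncomputable def maxC {X : Type*} [MetricSpace X] [MeasurableSpace X]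
    (μ : Measure X) (f : X → ℝ) (x : X) : ℝ≥0∞ :=
  ⨆ (r : ℝ) (_ : 0 < r),
    (μ (Metric.ball x r))⁻¹ * ∫⁻ y in Metric.ball x r, ENNReal.ofReal |f y| ∂μ

theorem stmt_6 (d : ℕ) (hd : 1 ≤ d)
    (μ : Measure (EuclideanSpace ℝ (Fin d)))
    (hμ : ∀ (z : EuclideanSpace ℝ (Fin d)) (s : ℝ), 0 < s →
      0 < μ (Metric.ball z s) ∧ μ (Metric.ball z s) < ⊤)
    (y₀ : EuclideanSpace ℝ (Fin d))
    (hlim : Filter.limsup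
      (fun r : ℝ => μ (Metric.ball y₀ (r + 1)) / μ (Metric.ball y₀ r)) Filter.atTop < ⊤)
    (f : EuclideanSpace ℝ (Fin d) → ℝ)
    (hf : ∀ (z : EuclideanSpace ℝ (Fin d)) (s : ℝ), IntegrableOn f (Metric.ball z s) μ)
    (x₀ : EuclideanSpace ℝ (Fin d)) (h₀ : maxC μ f x₀ < ⊤) :
    ∀ᵐ x ∂μ, maxC μ f x < ⊤ := by
  classical
  have hloc : LocallyIntegrable f μ :=
    fun x => ⟨Metric.ball x 1, Metric.ball_mem_nhds x one_pos, hf x 1⟩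
  haveI : IsLocallyFiniteMeasure μ :=
    ⟨fun x => ⟨Metric.ball x 1, Metric.ball_mem_nhds x one_pos, (hμ x 1 one_pos).2⟩⟩
  -- finiteness of integrals of |f| on balls
  have hint : ∀ (z : EuclideanSpace ℝ (Fin d)) (s : ℝ),
      (∫⁻ y in Metric.ball z s, ENNReal.ofReal |f y| ∂μ) ≠ ⊤ := by
    intro z s
    have h := (hf z s).2
    rw [hasFiniteIntegral_iff_norm] at h
    simpa only [Real.norm_eq_abs] using h.ne
  set M₀ := maxC μ f x₀ with hM₀
  -- control of integrals via the maximal function at x₀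
  have hT₀ : ∀ s : ℝ, 0 < s →
      (∫⁻ y in Metric.ball x₀ s, ENNReal.ofReal |f y| ∂μ) ≤ μ (Metric.ball x₀ s) * M₀ := by
    intro s hs
    have h1 : (μ (Metric.ball x₀ s))⁻¹ *
        ∫⁻ y in Metric.ball x₀ s, ENNReal.ofReal |f y| ∂μ ≤ M₀ :=
      le_iSup₂ (f := fun (r : ℝ) (_ : 0 < r) => (μ (Metric.ball x₀ r))⁻¹ *
        ∫⁻ y in Metric.ball x₀ r, ENNReal.ofReal |f y| ∂μ) s hs
    have hb := hμ x₀ s hs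
    calc (∫⁻ y in Metric.ball x₀ s, ENNReal.ofReal |f y| ∂μ)
        = μ (Metric.ball x₀ s) * ((μ (Metric.ball x₀ s))⁻¹ *
            ∫⁻ y in Metric.ball x₀ s, ENNReal.ofReal |f y| ∂μ) := by
          rw [← mul_assoc, ENNReal.mul_inv_cancel hb.1.ne' hb.2.ne, one_mul]
      _ ≤ μ (Metric.ball x₀ s) * M₀ := mul_le_mul_right h1 _
  -- the doubling constant at infinity
  set C := Filter.limsup
      (fun r : ℝ => μ (Metric.ball y₀ (r + 1)) / μ (Metric.ball y₀ r)) Filter.atTop + 1 with hC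
  have hCne : C ≠ ⊤ := ENNReal.add_ne_top.2 ⟨hlim.ne, ENNReal.one_ne_top⟩
  have hlt : Filter.limsup
      (fun r : ℝ => μ (Metric.ball y₀ (r + 1)) / μ (Metric.ball y₀ r)) Filter.atTop < C :=
    ENNReal.lt_add_right hlim.ne one_ne_zero
  have hev := Filter.eventually_lt_of_limsup_lt hlt
  rw [Filter.eventually_atTop] at hev
  obtain ⟨R₁, hR₁⟩ := hev
  set R₀ : ℝ := max R₁ 1 with hR₀def
  have hR₀pos : (0 : ℝ) < R₀ := lt_of_lt_of_le one_pos (le_max_right _ _)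
  have hdbl : ∀ r : ℝ, R₀ ≤ r → μ (Metric.ball y₀ (r + 1)) ≤ C * μ (Metric.ball y₀ r) := by
    intro r hr
    have hb := hμ y₀ r (lt_of_lt_of_le hR₀pos hr)
    have h := hR₁ r (le_trans (le_max_left _ _) hr)
    exact le_of_lt ((ENNReal.div_lt_iff (Or.inl hb.1.ne') (Or.inl hb.2.ne)).1 h)
  have hiter : ∀ (n : ℕ) (r : ℝ), R₀ ≤ r →
      μ (Metric.ball y₀ (r + n)) ≤ C ^ n * μ (Metric.ball y₀ r) := by
    intro n
    induction n with
    | zero => intro r hr; simp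
    | succ n ih =>
      intro r hr
      have e : (r + ((n : ℝ) + 1)) = (r + n) + 1 := by ring
      have hrn : R₀ ≤ r + n := le_trans hr (le_add_of_nonneg_right n.cast_nonneg)
      calc μ (Metric.ball y₀ (r + ((n : ℕ) + 1 : ℕ)))
          = μ (Metric.ball y₀ ((r + n) + 1)) := by push_cast; rw [e]
        _ ≤ C * μ (Metric.ball y₀ (r + n)) := hdbl _ hrn
        _ ≤ C * (C ^ n * μ (Metric.ball y₀ r)) := mul_le_mul_right (ih r hr) C
        _ = C ^ (n + 1) * μ (Metric.ball y₀ r) := by rw [pow_succ]; ring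
  -- Lebesgue differentiation
  have hae := (Besicovitch.vitaliFamily μ).ae_tendsto_lintegral_enorm_sub_div hloc
  filter_upwards [hae] with x hx
  have hx' := hx.comp (Besicovitch.tendsto_filterAt μ x)
  have h1 : ∀ᶠ r in nhdsWithin (0 : ℝ) (Set.Ioi 0),
      (∫⁻ y in Metric.closedBall x r, (‖f y - f x‖₊ : ℝ≥0∞) ∂μ) / μ (Metric.closedBall x r)
        < 1 := hx'.eventually_lt_const zero_lt_one
  obtain ⟨δ, hδmem, hδsub⟩ := mem_nhdsGT_iff_exists_Ioo_subset.1 h1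
  have hδpos : (0 : ℝ) < δ := hδmem
  have hsmall : ∀ r : ℝ, 0 < r → r < δ →
      (∫⁻ y in Metric.closedBall x r, (‖f y - f x‖₊ : ℝ≥0∞) ∂μ) ≤ μ (Metric.closedBall x r) := by
    intro r hr hrδ
    have h := hδsub ⟨hr, hrδ⟩
    have hbfin : μ (Metric.closedBall x r) ≠ ⊤ :=
      (lt_of_le_of_lt (measure_mono (Metric.closedBall_subset_ball (lt_add_one r)))
        (hμ x (r + 1) (by linarith)).2).ne
    have hbpos : μ (Metric.closedBall x r) ≠ 0 :=
      (lt_of_lt_of_le (hμ x r hr).1 (measure_mono Metric.ball_subset_closedBall)).ne'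
    have h2 := (ENNReal.div_lt_iff (Or.inl hbpos) (Or.inl hbfin)).1 h
    simpa using h2.le
  -- the same bound on open balls, via continuity from below
  have hsmall' : ∀ r : ℝ, 0 < r → r < δ →
      (∫⁻ y in Metric.ball x r, (‖f y - f x‖₊ : ℝ≥0∞) ∂μ) ≤ μ (Metric.ball x r) := by
    intro r hr hrδ
    set u : ℕ → Set (EuclideanSpace ℝ (Fin d)) :=
      fun n => Metric.closedBall x (r - r / (n + 2)) with hu
    have hradpos : ∀ n : ℕ, 0 < r - r / (n + 2) := by
      intro n
      have h0 : (0 : ℝ) ≤ n := Nat.cast_nonneg n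
      have h1 : r / ((n : ℝ) + 2) < r := div_lt_self hr (by linarith)
      linarith
    have hradlt : ∀ n : ℕ, r - r / (n + 2) < r := by
      intro n
      have : (0 : ℝ) < r / (n + 2) := by positivity
      linarith
    have husub : ∀ n, u n ⊆ Metric.ball x r :=
      fun n => Metric.closedBall_subset_ball (hradlt n)
    have hmono : Monotone u := by
      intro m n hmn
      apply Metric.closedBall_subset_closedBall
      have h2 : r / ((n : ℝ) + 2) ≤ r / ((m : ℝ) + 2) := by
        apply div_le_div_of_nonneg_left hr.le (by positivity)
        have : (m : ℝ) ≤ n := Nat.cast_le.2 hmn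
        linarith
      linarith
    have hunion : Metric.ball x r = ⋃ n, u n := by
      ext z
      simp only [Metric.mem_ball, Set.mem_iUnion, Metric.mem_closedBall, hu]
      constructor
      · intro hz
        have hpos : 0 < r - dist z x := by linarith
        obtain ⟨n, hn⟩ := exists_nat_gt (r / (r - dist z x))
        refine ⟨n, ?_⟩
        have h2 : r / ((n : ℝ) + 2) ≤ r - dist z x := by
          rw [div_le_iff₀ (by positivity)]
          have h3 : r / (r - dist z x) ≤ (n : ℝ) + 2 := by linarith
          calc r = r / (r - dist z x) * (r - dist z x) := by field_simp
            _ ≤ ((n : ℝ) + 2) * (r - dist z x) := mul_le_mul_of_nonneg_right h3 hpos.le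
            _ = (r - dist z x) * ((n : ℝ) + 2) := by ring
        linarith
      · rintro ⟨n, hn⟩
        have := hradlt n
        linarith
    set ν := μ.withDensity (fun y => (‖f y - f x‖₊ : ℝ≥0∞)) with hν
    have happ : ∀ (s : Set (EuclideanSpace ℝ (Fin d))), MeasurableSet s →
        ν s = ∫⁻ y in s, (‖f y - f x‖₊ : ℝ≥0∞) ∂μ := fun s hs => withDensity_apply _ hs
    calc (∫⁻ y in Metric.ball x r, (‖f y - f x‖₊ : ℝ≥0∞) ∂μ)
        = ν (Metric.ball x r) := (happ _ measurableSet_ball).symm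
      _ = ⨆ n, ν (u n) := by rw [hunion]; exact hmono.directed_le.measure_iUnion
      _ ≤ μ (Metric.ball x r) := by
          apply iSup_le
          intro n
          calc ν (u n) = ∫⁻ y in u n, (‖f y - f x‖₊ : ℝ≥0∞) ∂μ :=
                happ _ Metric.isClosed_closedBall.measurableSet
            _ ≤ μ (u n) := hsmall _ (hradpos n) (lt_trans (hradlt n) hrδ)
            _ ≤ μ (Metric.ball x r) := measure_mono (husub n)
  -- small radii bound for the maximal function
  have hTsmall : ∀ r : ℝ, 0 < r → r < δ →
      (μ (Metric.ball x r))⁻¹ * ∫⁻ y in Metric.ball x r, ENNReal.ofReal |f y| ∂μ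
        ≤ 1 + ENNReal.ofReal |f x| := by
    intro r hr hrδ
    have hb := hμ x r hr
    have hpt : ∀ y, ENNReal.ofReal |f y| ≤ (‖f y - f x‖₊ : ℝ≥0∞) + ENNReal.ofReal |f x| := by
      intro y
      rw [← enorm_eq_nnnorm, Real.enorm_eq_ofReal_abs, ← ENNReal.ofReal_add (abs_nonneg _) (abs_nonneg _)]
      exact ENNReal.ofReal_le_ofReal (by
        have := abs_sub_abs_le_abs_sub (f y) (f x); linarith [abs_nonneg (f y - f x)])
    calc (μ (Metric.ball x r))⁻¹ * ∫⁻ y in Metric.ball x r, ENNReal.ofReal |f y| ∂μ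
        ≤ (μ (Metric.ball x r))⁻¹ *
            ∫⁻ y in Metric.ball x r, ((‖f y - f x‖₊ : ℝ≥0∞) + ENNReal.ofReal |f x|) ∂μ :=
          mul_le_mul_right (lintegral_mono hpt) _
      _ = (μ (Metric.ball x r))⁻¹ *
            ((∫⁻ y in Metric.ball x r, (‖f y - f x‖₊ : ℝ≥0∞) ∂μ) +
              μ (Metric.ball x r) * ENNReal.ofReal |f x|) := by
          rw [lintegral_add_right _ measurable_const, setLIntegral_const, mul_comm (ENNReal.ofReal |f x|)]
      _ ≤ (μ (Metric.ball x r))⁻¹ *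
            (μ (Metric.ball x r) + μ (Metric.ball x r) * ENNReal.ofReal |f x|) := by
          gcongr
          exact hsmall' r hr hrδ
      _ = (μ (Metric.ball x r))⁻¹ * (μ (Metric.ball x r) * (1 + ENNReal.ofReal |f x|)) := by
          ring
      _ = 1 + ENNReal.ofReal |f x| := by
          rw [← mul_assoc, ENNReal.inv_mul_cancel hb.1.ne' hb.2.ne, one_mul]
  -- notation for the tail estimate
  set ρ : ℝ := dist x y₀ with hρdef
  set ρ₀ : ℝ := dist x₀ y₀ with hρ₀def
  have hρ : 0 ≤ ρ := dist_nonneg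
  have hρ₀ : 0 ≤ ρ₀ := dist_nonneg
  set n : ℕ := ⌈2 * ρ + 2 * ρ₀ + 1⌉₊ with hn
  -- tail bound
  have hTtail : ∀ r : ℝ, R₀ + ρ ≤ r →
      (μ (Metric.ball x r))⁻¹ * ∫⁻ y in Metric.ball x r, ENNReal.ofReal |f y| ∂μ
        ≤ C ^ n * M₀ := by
    intro r hr
    have hrρ : R₀ ≤ r - ρ := by linarith
    have hrρpos : 0 < r - ρ := lt_of_lt_of_le hR₀pos hrρ
    have hsub1 : Metric.ball y₀ (r - ρ) ⊆ Metric.ball x r := by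
      intro z hz
      rw [Metric.mem_ball] at hz ⊢
      have h3 : dist z x ≤ dist z y₀ + dist y₀ x := dist_triangle _ _ _
      have h4 : dist y₀ x = ρ := by rw [hρdef, dist_comm]
      linarith
    have hsub2 : Metric.ball x r ⊆ Metric.ball x₀ (r + ρ + ρ₀ + 1) := by
      intro z hz
      rw [Metric.mem_ball] at hz ⊢
      have h3 : dist z x₀ ≤ dist z x + dist x y₀ + dist y₀ x₀ :=
        le_trans (dist_triangle z x x₀) (by linarith [dist_triangle x y₀ x₀])
      have h4 : dist y₀ x₀ = ρ₀ := by rw [hρ₀def, dist_comm]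
      linarith
    have hsub3 : Metric.ball x₀ (r + ρ + ρ₀ + 1) ⊆ Metric.ball y₀ ((r - ρ) + n) := by
      intro z hz
      rw [Metric.mem_ball] at hz ⊢
      have h3 : dist z y₀ ≤ dist z x₀ + dist x₀ y₀ := dist_triangle _ _ _
      have h5 : 2 * ρ + 2 * ρ₀ + 1 ≤ (n : ℝ) := Nat.le_ceil _
      linarith
    have hb := hμ y₀ (r - ρ) hrρpos
    calc (μ (Metric.ball x r))⁻¹ * ∫⁻ y in Metric.ball x r, ENNReal.ofReal |f y| ∂μ
        ≤ (μ (Metric.ball y₀ (r - ρ)))⁻¹ *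
            ∫⁻ y in Metric.ball x₀ (r + ρ + ρ₀ + 1), ENNReal.ofReal |f y| ∂μ :=
          mul_le_mul' (ENNReal.inv_le_inv.2 (measure_mono hsub1))
            (lintegral_mono' (Measure.restrict_mono hsub2 le_rfl) le_rfl)
      _ ≤ (μ (Metric.ball y₀ (r - ρ)))⁻¹ * (μ (Metric.ball x₀ (r + ρ + ρ₀ + 1)) * M₀) :=
          mul_le_mul_right (hT₀ _ (by linarith)) _
      _ ≤ (μ (Metric.ball y₀ (r - ρ)))⁻¹ * ((C ^ n * μ (Metric.ball y₀ (r - ρ))) * M₀) :=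
          mul_le_mul_right (mul_le_mul_left
            (le_trans (measure_mono hsub3) (hiter n (r - ρ) hrρ)) M₀) _
      _ = C ^ n * M₀ * ((μ (Metric.ball y₀ (r - ρ)))⁻¹ * μ (Metric.ball y₀ (r - ρ))) := by
          ring
      _ = C ^ n * M₀ := by rw [ENNReal.inv_mul_cancel hb.1.ne' hb.2.ne, mul_one]
  -- the global bound
  set K : ℝ≥0∞ := (1 + ENNReal.ofReal |f x|) ⊔
      ((μ (Metric.ball x (δ / 2)))⁻¹ *
        ∫⁻ y in Metric.ball x (R₀ + ρ + 1), ENNReal.ofReal |f y| ∂μ) ⊔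
      (C ^ n * M₀) with hK
  have hKlt : K < ⊤ := by
    rw [hK]
    apply max_lt (max_lt _ _) _
    · exact ENNReal.add_lt_top.2 ⟨ENNReal.one_lt_top, ENNReal.ofReal_lt_top⟩
    · exact ENNReal.mul_lt_top
        (ENNReal.inv_lt_top.2 (hμ x (δ / 2) (by linarith)).1) (lt_top_iff_ne_top.2 (hint x _))
    · exact ENNReal.mul_lt_top (lt_top_iff_ne_top.2 (ENNReal.pow_ne_top hCne))
        (lt_top_iff_ne_top.2 h₀.ne)
  refine lt_of_le_of_lt ?_ hKlt
  simp only [maxC]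
  apply iSup₂_le
  intro r hr
  rcases lt_or_ge r δ with hcase | hcase
  · exact le_trans (hTsmall r hr hcase) (le_trans le_sup_left le_sup_left)
  · rcases le_or_gt r (R₀ + ρ) with hcase2 | hcase2
    · refine le_trans ?_ (le_trans le_sup_right le_sup_left)
      exact mul_le_mul' (ENNReal.inv_le_inv.2 (measure_mono
          (Metric.ball_subset_ball (by linarith))))
        (lintegral_mono' (Measure.restrict_mono
          (Metric.ball_subset_ball (by linarith)) le_rfl) le_rfl)
    · exact le_trans (hTtail r hcase2.le) le_sup_right
end

section
/- Consider ℝ with the Euclidean metric and the measure dμ(x) = exp(x²) dx. Let f(x) = x·𝟙_{(0,∞)}(x). Then the centered maximal function Mf(x) = sup_{r>0} (1/μ((x−r, x+r))) ∫_{(x−r,x+r)} |f| dμ satisfies: Mf(x) = ∞ for every x ≥ 0, and Mf(x) < ∞ for every x < 0. In particular, the centered Hardy–Littlewood maximal operator on (ℝ, d_e, μ) does not possess the dichotomy property. -/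
open MeasureTheory
open scoped ENNReal

/-- The measure `dμ(x) = exp(x²) dx` on the real line. -/
noncomputable def μ7 : Measure ℝ :=
  volume.withDensity fun x => ENNReal.ofReal (Real.exp (x ^ 2))

/-- The function `f(x) = x · 𝟙_{(0,∞)}(x)`. -/
noncomputable def f7 : ℝ → ℝ := fun x => if 0 < x then x else 0

/-- The centered Hardy–Littlewood maximal function of `f7` with respect to `μ7`. -/
noncomputable def M7 (x : ℝ) : ℝ≥0∞ :=
  ⨆ (r : ℝ) (_ : 0 < r),
    (μ7 (Metric.ball x r))⁻¹ * ∫⁻ y in Metric.ball x r, ENNReal.ofReal |f7 y| ∂μ7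

lemma mu7_apply {s : Set ℝ} (hs : MeasurableSet s) :
    μ7 s = ∫⁻ y in s, ENNReal.ofReal (Real.exp (y ^ 2)) ∂volume := by
  rw [μ7, withDensity_apply _ hs]

lemma f7_meas : Measurable f7 := by
  unfold f7
  exact Measurable.ite (measurableSet_lt measurable_const measurable_id) measurable_id measurable_const

lemma num_eq (x r : ℝ) :
    (∫⁻ y in Metric.ball x r, ENNReal.ofReal |f7 y| ∂μ7)
      = ∫⁻ y in Set.Ioo (max (x - r) 0) (x + r), ENNReal.ofReal (y * Real.exp (y ^ 2)) ∂volume := by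
  have hball : MeasurableSet (Metric.ball x r) := measurableSet_ball
  rw [μ7, restrict_withDensity hball,
    lintegral_withDensity_eq_lintegral_mul _
      (by measurability) (f7_meas.abs.ennreal_ofReal)]
  have : ∀ y : ℝ, (ENNReal.ofReal (Real.exp (y ^ 2)) * ENNReal.ofReal |f7 y|)
      = Set.indicator (Set.Ioi 0) (fun y => ENNReal.ofReal (y * Real.exp (y ^ 2))) y := by
    intro y
    rw [← ENNReal.ofReal_mul (Real.exp_nonneg _)]
    by_cases hy : 0 < y
    · rw [Set.indicator_of_mem (Set.mem_Ioi.2 hy)]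
      unfold f7
      rw [if_pos hy, abs_of_pos hy]
      ring_nf
    · rw [Set.indicator_of_notMem (by simpa using hy)]
      unfold f7
      rw [if_neg hy, abs_zero, mul_zero, ENNReal.ofReal_zero]
  simp only [Pi.mul_apply, this]
  rw [lintegral_indicator measurableSet_Ioi, Measure.restrict_restrict measurableSet_Ioi,
    Real.ball_eq_Ioo, Set.inter_comm, Set.Ioo_inter_Ioi]

lemma lint_ofReal_Ioo {g G : ℝ → ℝ} (hg : Continuous g) {a b : ℝ} (hab : a ≤ b)
    (hnn : ∀ y ∈ Set.Ioo a b, 0 ≤ g y)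
    (hder : ∀ y ∈ Set.uIcc a b, HasDerivAt G (g y) y) :
    ∫⁻ y in Set.Ioo a b, ENNReal.ofReal (g y) = ENNReal.ofReal (G b - G a) := by
  rw [← ofReal_integral_eq_lintegral_ofReal
      ((hg.integrableOn_Icc).mono_set Set.Ioo_subset_Icc_self)
      ((ae_restrict_iff' measurableSet_Ioo).2 (ae_of_all _ hnn))]
  congr 1
  rw [← integral_Ioc_eq_integral_Ioo, ← intervalIntegral.integral_of_le hab]
  exact intervalIntegral.integral_eq_sub_of_hasDerivAt hder (hg.intervalIntegrable a b)

lemma L1 {b : ℝ} (hb : 0 ≤ b) :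
    ∫⁻ y in Set.Ioo 0 b, ENNReal.ofReal (y * Real.exp (y ^ 2))
      = ENNReal.ofReal ((Real.exp (b ^ 2) - 1) / 2) := by
  have := lint_ofReal_Ioo (g := fun y => y * Real.exp (y ^ 2))
      (G := fun y => Real.exp (y ^ 2) / 2) (by fun_prop) hb
      (fun y hy => mul_nonneg hy.1.le (Real.exp_nonneg _))
      (fun y _ => by
        have h : HasDerivAt (fun y : ℝ => Real.exp (y ^ 2) / 2)
            (Real.exp (y ^ 2) * (2 * y ^ 1) / 2) y :=
          (((hasDerivAt_pow 2 y)).exp).div_const 2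
        convert h using 1
        ring)
  rw [this]
  congr 1
  simp [Real.exp_zero]
  ring_nf

lemma L2 {b : ℝ} (hb : 0 < b) :
    ∫⁻ y in Set.Ioo (-b) b, ENNReal.ofReal (Real.exp (y ^ 2))
      ≤ ENNReal.ofReal (2 * Real.exp (b ^ 2) / b) := by
  have step1 : ∫⁻ y in Set.Ioo (-b) b, ENNReal.ofReal (Real.exp (y ^ 2))
      ≤ ∫⁻ y in Set.Ioo (-b) b,
        ENNReal.ofReal (Real.exp (b * y) + Real.exp (-(b * y))) := by
    apply setLIntegral_mono (by fun_prop)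
    intro y hy
    apply ENNReal.ofReal_le_ofReal
    rcases le_total 0 y with h0 | h0
    · have h1 : y ^ 2 ≤ b * y := by nlinarith [hy.2]
      calc Real.exp (y ^ 2) ≤ Real.exp (b * y) := Real.exp_le_exp.2 h1
        _ ≤ _ := le_add_of_nonneg_right (Real.exp_nonneg _)
    · have h1 : y ^ 2 ≤ -(b * y) := by nlinarith [hy.1]
      calc Real.exp (y ^ 2) ≤ Real.exp (-(b * y)) := Real.exp_le_exp.2 h1
        _ ≤ _ := le_add_of_nonneg_left (Real.exp_nonneg _)
  have step2 : ∫⁻ y in Set.Ioo (-b) b,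
      ENNReal.ofReal (Real.exp (b * y) + Real.exp (-(b * y)))
      = ENNReal.ofReal (2 * (Real.exp (b ^ 2) - Real.exp (-(b ^ 2))) / b) := by
    have := lint_ofReal_Ioo (g := fun y => Real.exp (b * y) + Real.exp (-(b * y)))
        (G := fun y => (Real.exp (b * y) - Real.exp (-(b * y))) / b) (by fun_prop)
        (by linarith : -b ≤ b)
        (fun y _ => by positivity)
        (fun y _ => by
          have hb' : HasDerivAt (fun y : ℝ => b * y) b y := by
            simpa using (hasDerivAt_id y).const_mul b
          have h : HasDerivAt (fun y : ℝ => (Real.exp (b * y) - Real.exp (-(b * y))) / b)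
              ((Real.exp (b * y) * b - Real.exp (-(b * y)) * (-b)) / b) y :=
            ((hb'.exp).sub ((hb'.neg).exp)).div_const b
          convert h using 1
          field_simp
          ring)
    rw [this]
    congr 1
    have hbb : b * b = b ^ 2 := by ring
    have hbn : b * -b = -b ^ 2 := by ring
    rw [hbb, hbn]
    ring
  refine step1.trans (step2.le.trans (ENNReal.ofReal_le_ofReal ?_))
  have h1 : 0 < Real.exp (-(b ^ 2)) := Real.exp_pos _
  have h2 : (0:ℝ) < b := hb
  rw [div_le_div_iff₀ h2 h2]
  nlinarith

lemma denom_lb {x r δ : ℝ} (hδ : 0 < δ) (hδr : δ ≤ 2 * r) (hneg : x - r + δ ≤ 0) :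
    ENNReal.ofReal (δ * Real.exp ((x - r + δ) ^ 2)) ≤ μ7 (Metric.ball x r) := by
  rw [Real.ball_eq_Ioo, mu7_apply measurableSet_Ioo]
  calc ENNReal.ofReal (δ * Real.exp ((x - r + δ) ^ 2))
      = ENNReal.ofReal (Real.exp ((x - r + δ) ^ 2)) * volume (Set.Ioo (x - r) (x - r + δ)) := by
        rw [Real.volume_Ioo]
        rw [← ENNReal.ofReal_mul (Real.exp_nonneg _)]
        congr 1
        ring_nf
    _ = ∫⁻ _ in Set.Ioo (x - r) (x - r + δ), ENNReal.ofReal (Real.exp ((x - r + δ) ^ 2)) := by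
        rw [setLIntegral_const]
    _ ≤ ∫⁻ y in Set.Ioo (x - r) (x - r + δ), ENNReal.ofReal (Real.exp (y ^ 2)) := by
        apply setLIntegral_mono (by fun_prop)
        intro y hy
        apply ENNReal.ofReal_le_ofReal
        apply Real.exp_le_exp.2
        nlinarith [hy.1, hy.2]
    _ ≤ ∫⁻ y in Set.Ioo (x - r) (x + r), ENNReal.ofReal (Real.exp (y ^ 2)) := by
        apply lintegral_mono_set
        apply Set.Ioo_subset_Ioo le_rfl
        linarith

lemma part1 (x : ℝ) (hx : 0 ≤ x) : M7 x = ⊤ := by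
  apply ENNReal.eq_top_of_forall_nnreal_le
  intro c
  set r : ℝ := x + 8 * ((c : ℝ) + 1) with hrdef
  have hc0 : (0:ℝ) ≤ (c:ℝ) := c.coe_nonneg
  have hrpos : 0 < r := by positivity
  set b : ℝ := x + r with hbdef
  have hb8 : 8 * (c:ℝ) + 8 ≤ b := by simp [hbdef, hrdef]; linarith
  have hbpos : (0:ℝ) < b := by linarith
  rw [M7]
  refine le_trans ?_ (le_iSup₂ r hrpos)
  -- numerator
  have hnum : (∫⁻ y in Metric.ball x r, ENNReal.ofReal |f7 y| ∂μ7)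
      = ENNReal.ofReal ((Real.exp (b ^ 2) - 1) / 2) := by
    rw [num_eq, max_eq_right (by linarith : x - r ≤ 0), ← hbdef, L1 hbpos.le]
  -- denominator
  have hden : μ7 (Metric.ball x r) ≤ ENNReal.ofReal (2 * Real.exp (b ^ 2) / b) := by
    calc μ7 (Metric.ball x r) ≤ μ7 (Set.Ioo (-b) b) := by
          apply measure_mono
          rw [Real.ball_eq_Ioo]
          apply Set.Ioo_subset_Ioo (by linarith) le_rfl
      _ ≤ _ := by rw [mu7_apply measurableSet_Ioo]; exact L2 hbpos
  rw [hnum]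
  have hDpos : (0:ℝ) < 2 * Real.exp (b ^ 2) / b := by positivity
  calc (c : ℝ≥0∞) ≤ ENNReal.ofReal ((2 * Real.exp (b ^ 2) / b)⁻¹ * ((Real.exp (b ^ 2) - 1) / 2)) := by
        rw [← ENNReal.ofReal_coe_nnreal]
        apply ENNReal.ofReal_le_ofReal
        have hE : Real.exp (b ^ 2) ≥ 2 := by
          have := Real.add_one_le_exp (b ^ 2)
          nlinarith
        rw [inv_div, div_mul_div_comm, le_div_iff₀ (by positivity)]
        nlinarith [mul_nonneg hc0 (by linarith : (0:ℝ) ≤ Real.exp (b ^ 2) - 2)]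
      _ = (ENNReal.ofReal (2 * Real.exp (b ^ 2) / b))⁻¹ * ENNReal.ofReal ((Real.exp (b ^ 2) - 1) / 2) := by
        rw [← ENNReal.ofReal_inv_of_pos hDpos, ← ENNReal.ofReal_mul (by positivity)]
      _ ≤ (μ7 (Metric.ball x r))⁻¹ * ENNReal.ofReal ((Real.exp (b ^ 2) - 1) / 2) :=
        mul_le_mul' (ENNReal.inv_le_inv' hden) le_rfl

lemma part2 (x : ℝ) (hx : x < 0) : M7 x < ⊤ := by
  set δ : ℝ := min 1 (-x) with hδdef
  have hδ0 : 0 < δ := lt_min one_pos (by linarith)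
  have hδx : δ ≤ -x := min_le_right _ _
  refine lt_of_le_of_lt (?_ : M7 x ≤ ENNReal.ofReal (Real.exp (2 * x ^ 2) / (2 * δ)))
    ENNReal.ofReal_lt_top
  rw [M7]
  refine iSup₂_le fun r hr => ?_
  rw [num_eq]
  by_cases hrx : x + r ≤ 0
  · have hempty : Set.Ioo (max (x - r) 0) (x + r) = ∅ :=
      Set.Ioo_eq_empty (by simp; intro h; linarith)
    simp [hempty]
  · push_neg at hrx
    have hmax : max (x - r) 0 = 0 := max_eq_right (by linarith)
    rw [hmax, L1 (by linarith : (0:ℝ) ≤ x + r)]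
    set A : ℝ := (x - r + δ) ^ 2 with hAdef
    have hden := denom_lb (x := x) (r := r) (δ := δ) hδ0 (by linarith) (by linarith)
    have hApos : (0:ℝ) < δ * Real.exp A := by positivity
    calc (μ7 (Metric.ball x r))⁻¹ * ENNReal.ofReal ((Real.exp ((x + r) ^ 2) - 1) / 2)
        ≤ (ENNReal.ofReal (δ * Real.exp A))⁻¹ * ENNReal.ofReal (Real.exp ((x + r) ^ 2) / 2) :=
          mul_le_mul' (ENNReal.inv_le_inv' hden)
            (ENNReal.ofReal_le_ofReal (by have := Real.exp_pos ((x + r) ^ 2); linarith))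
      _ = ENNReal.ofReal ((δ * Real.exp A)⁻¹ * (Real.exp ((x + r) ^ 2) / 2)) := by
          rw [← ENNReal.ofReal_inv_of_pos hApos, ← ENNReal.ofReal_mul (by positivity)]
      _ ≤ ENNReal.ofReal (Real.exp (2 * x ^ 2) / (2 * δ)) := by
          apply ENNReal.ofReal_le_ofReal
          have key : Real.exp ((x + r) ^ 2) ≤ Real.exp (2 * x ^ 2) * Real.exp A := by
            rw [← Real.exp_add]
            apply Real.exp_le_exp.2
            rw [hAdef]
            nlinarith [mul_nonneg (by linarith : (0:ℝ) ≤ -x - δ) hr.le]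
          rw [inv_mul_le_iff₀ hApos]
          have heq : δ * Real.exp A * (Real.exp (2 * x ^ 2) / (2 * δ))
              = Real.exp A * Real.exp (2 * x ^ 2) / 2 := by
            field_simp
          rw [heq]
          have := Real.exp_pos A
          nlinarith

theorem stmt_7 :
    (∀ x : ℝ, 0 ≤ x → M7 x = ⊤) ∧ (∀ x : ℝ, x < 0 → M7 x < ⊤) := by
  exact ⟨part1, part2⟩
end

section
/- Consider ℤ² with the supremum metric d_∞ and the measure μ defined by μ({(n,m)}) = 4^{|m|} if n = 0 and μ({(n,m)}) = 1 otherwise. Let f(n,m) = 2^n if n > 0 and m = 0, and f(n,m) = 0 otherwise. Then the noncentered maximal function M̃f (with respect to μ and d_∞-balls) satisfies M̃f(1,0) = ∞ and M̃f(−1,0) < ∞. In particular, the noncentered Hardy–Littlewood maximal operator on (ℤ², d_∞, μ) does not possess the dichotomy property. -/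
open MeasureTheory
open scoped ENNReal

/-- The weight `w(n,m) = 4^{|m|}` if `n = 0`, and `1` otherwise. -/
noncomputable def w8 : ℤ × ℤ → ℝ≥0∞ := fun p => if p.1 = 0 then 4 ^ p.2.natAbs else 1

/-- The measure on `ℤ²` given by `μ({(n,m)}) = 4^{|m|}` if `n = 0` and `1` otherwise. -/
noncomputable def μ8 : Measure (ℤ × ℤ) := Measure.count.withDensity w8

/-- The function `f(n,m) = 2^n` if `n > 0` and `m = 0`, and `0` otherwise. -/
noncomputable def f8 : ℤ × ℤ → ℝ :=
  fun p => if 0 < p.1 ∧ p.2 = 0 then 2 ^ p.1.toNat else 0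

/-- The noncentered Hardy–Littlewood maximal function of `f8` on `(ℤ², d_∞, μ8)`
(the product metric on `ℤ × ℤ` is the supremum metric). -/
noncomputable def maxN8 (x : ℤ × ℤ) : ℝ≥0∞ :=
  ⨆ (z : ℤ × ℤ) (s : ℝ) (_ : x ∈ Metric.ball z s),
    (μ8 (Metric.ball z s))⁻¹ * ∫⁻ y in Metric.ball z s, ENNReal.ofReal |f8 y| ∂μ8

/-! ### Auxiliary lemmas -/

lemma mu8_finset (F : Finset (ℤ × ℤ)) : μ8 ↑F = ∑ y ∈ F, w8 y := by
  rw [μ8, withDensity_apply _ F.countable_toSet.measurableSet, lintegral_finset]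
  simp [Measure.count_singleton]

lemma mu8_singleton (x : ℤ × ℤ) : μ8 {x} = w8 x := by
  have := mu8_finset {x}; simpa using this

lemma growth8 : ∀ n : ℕ, 15 ≤ n → n * (2 * n + 1) ^ 2 ≤ 2 ^ n := by
  intro n hn
  induction n, hn using Nat.le_induction with
  | base => norm_num
  | succ n hn ih =>
    have h2 : (n + 1) * (2 * (n + 1) + 1) ^ 2 ≤ 2 * (n * (2 * n + 1) ^ 2) := by nlinarith
    calc (n + 1) * (2 * (n + 1) + 1) ^ 2 ≤ 2 * (n * (2 * n + 1) ^ 2) := h2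
      _ ≤ 2 * 2 ^ n := by omega
      _ = 2 ^ (n + 1) := by ring

lemma geom8 : ∀ K : ℕ, ∑ j ∈ Finset.range K, (2:ℝ≥0∞) ^ j ≤ 2 ^ K := by
  intro K
  induction K with
  | zero => simp
  | succ K ih =>
    rw [Finset.sum_range_succ, pow_succ]
    calc ∑ j ∈ Finset.range K, (2:ℝ≥0∞) ^ j + 2 ^ K ≤ 2 ^ K + 2 ^ K := by
          exact add_le_add ih le_rfl
      _ = 2 ^ K * 2 := by ring

lemma ball8 (p z : ℤ × ℤ) (s : ℝ) :
    p ∈ Metric.ball z s ↔ |(p.1:ℝ) - z.1| < s ∧ |(p.2:ℝ) - z.2| < s := by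
  simp [Metric.mem_ball, Prod.dist_eq, Int.dist_eq, max_lt_iff]

lemma part1_8 : maxN8 (1, 0) = ⊤ := by
  by_contra h
  obtain ⟨k, hk⟩ := ENNReal.exists_nat_gt h
  have hk' : ¬ ((k:ℝ≥0∞) ≤ maxN8 (1, 0)) := not_le.2 hk
  apply hk'
  set N : ℕ := k + 15 with hN
  have hmem : ((1:ℤ), (0:ℤ)) ∈ Metric.ball (((N:ℤ) + 1, 0) : ℤ × ℤ) ((N:ℝ) + 1) := by
    rw [ball8]
    have hN0 : (0:ℝ) ≤ (N:ℝ) := Nat.cast_nonneg N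
    constructor
    · push_cast
      rw [abs_sub_lt_iff]
      constructor <;> linarith
    · simpa using by positivity
  have hμ : μ8 (Metric.ball (((N:ℤ) + 1, 0) : ℤ × ℤ) ((N:ℝ) + 1))
      ≤ ((2 * N + 1 : ℕ) : ℝ≥0∞) ^ 2 := by
    have hsub : Metric.ball (((N:ℤ) + 1, 0) : ℤ × ℤ) ((N:ℝ) + 1)
        ⊆ ↑(Finset.Icc ((1:ℤ), -(N:ℤ)) ((2*N+1 : ℤ), (N:ℤ))) := by
      intro p hp
      rw [ball8] at hp
      obtain ⟨h1, h2⟩ := hp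
      rw [abs_sub_lt_iff] at h1 h2
      simp only [Finset.coe_Icc, Set.mem_Icc, Prod.le_def]
      have c1 : p.1 - ((N:ℤ) + 1) < (N:ℤ) + 1 := by exact_mod_cast h1.1
      have c2 : ((N:ℤ) + 1) - p.1 < (N:ℤ) + 1 := by exact_mod_cast h1.2
      have c3 : p.2 - 0 < (N:ℤ) + 1 := by exact_mod_cast h2.1
      have c4 : (0:ℤ) - p.2 < (N:ℤ) + 1 := by exact_mod_cast h2.2
      omega
    refine le_trans (measure_mono hsub) ?_
    rw [mu8_finset]
    have hw : ∀ y ∈ Finset.Icc ((1:ℤ), -(N:ℤ)) ((2*N+1 : ℤ), (N:ℤ)), w8 y = 1 := by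
      intro y hy
      rw [Finset.mem_Icc, Prod.le_def, Prod.le_def] at hy
      have : y.1 ≠ 0 := by omega
      simp [w8, this]
    rw [Finset.sum_congr rfl hw, Finset.sum_const, Finset.card_Icc_prod]
    simp only [Int.card_Icc]
    have e1 : ((2 * (N:ℤ) + 1) + 1 - 1).toNat = 2 * N + 1 := by omega
    have e2 : ((N:ℤ) + 1 - -(N:ℤ)).toNat = 2 * N + 1 := by omega
    rw [e1, e2, nsmul_eq_mul]
    refine le_of_eq ?_
    push_cast
    ring
  have hint : (2:ℝ≥0∞) ^ (N + 1)
      ≤ ∫⁻ y in Metric.ball (((N:ℤ) + 1, 0) : ℤ × ℤ) ((N:ℝ) + 1), ENNReal.ofReal |f8 y| ∂μ8 := by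
    have hsing : ({((N:ℤ)+1, (0:ℤ))} : Set (ℤ × ℤ))
        ⊆ Metric.ball (((N:ℤ) + 1, 0) : ℤ × ℤ) ((N:ℝ) + 1) := by
      rw [Set.singleton_subset_iff, ball8]
      norm_num
      positivity
    refine le_trans ?_ (lintegral_mono_set hsing)
    rw [lintegral_singleton, mu8_singleton]
    have hf : f8 ((N:ℤ)+1, (0:ℤ)) = 2 ^ (N+1) := by
      have ht : ((N:ℤ)+1).toNat = N + 1 := by omega
      simp [f8, ht]
    have hw : w8 ((N:ℤ)+1, (0:ℤ)) = 1 := by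
      have : ((N:ℤ)+1) ≠ 0 := by omega
      simp [w8, this]
    rw [hf, hw, mul_one, abs_of_nonneg (by positivity)]
    rw [ENNReal.ofReal_pow (by norm_num)]
    simp
  have hterm : (k:ℝ≥0∞) ≤ (μ8 (Metric.ball (((N:ℤ) + 1, 0) : ℤ × ℤ) ((N:ℝ) + 1)))⁻¹
      * ∫⁻ y in Metric.ball (((N:ℤ) + 1, 0) : ℤ × ℤ) ((N:ℝ) + 1), ENNReal.ofReal |f8 y| ∂μ8 := by
    have hknat : k * (2 * N + 1) ^ 2 ≤ 2 ^ (N + 1) := by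
      calc k * (2 * N + 1) ^ 2 ≤ N * (2 * N + 1) ^ 2 := by
            exact Nat.mul_le_mul_right _ (by omega)
        _ ≤ 2 ^ N := growth8 N (by omega)
        _ ≤ 2 ^ (N + 1) := Nat.pow_le_pow_right (by norm_num) (by omega)
    have hkE : (k:ℝ≥0∞) * ((2 * N + 1 : ℕ) : ℝ≥0∞) ^ 2 ≤ (2:ℝ≥0∞) ^ (N + 1) := by
      have h2 := (Nat.cast_le (α := ℝ≥0∞)).2 hknat
      push_cast at h2
      push_cast; exact h2
    have h1 : (k:ℝ≥0∞) ≤ (((2 * N + 1 : ℕ) : ℝ≥0∞) ^ 2)⁻¹ * (2:ℝ≥0∞) ^ (N + 1) := by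
      rw [← ENNReal.div_eq_inv_mul]
      rw [ENNReal.le_div_iff_mul_le
        (Or.inl (pow_ne_zero _ (Nat.cast_ne_zero.2 (by omega))))
        (Or.inl (ENNReal.pow_ne_top (ENNReal.natCast_ne_top _)))]
      exact hkE
    exact le_trans h1 (mul_le_mul' (ENNReal.inv_le_inv.2 hμ) hint)
  refine le_trans hterm ?_
  rw [maxN8]
  exact le_iSup_of_le (((N:ℤ) + 1, 0) : ℤ × ℤ) (le_iSup_of_le ((N:ℝ) + 1)
    (le_iSup_of_le hmem le_rfl))

lemma part2_8 : maxN8 (-1, 0) ≤ 4 := by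
  rw [maxN8]
  refine iSup_le fun z => iSup_le fun s => iSup_le fun hx => ?_
  by_cases hex : ∃ n : ℤ, 0 < n ∧ ((n, (0:ℤ)) : ℤ × ℤ) ∈ Metric.ball z s
  swap
  · -- integral is zero
    have hzero : ∀ y, (Metric.ball z s).indicator (fun y => ENNReal.ofReal |f8 y|) y = 0 := by
      intro y
      by_cases hyB : y ∈ Metric.ball z s
      · rw [Set.indicator_of_mem hyB]
        by_cases hy : 0 < y.1 ∧ y.2 = 0
        · exact absurd ⟨y.1, hy.1, by rw [← hy.2]; exact hyB⟩ hex
        · simp [f8, hy]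
      · rw [Set.indicator_of_notMem hyB]
    have hI : ∫⁻ y in Metric.ball z s, ENNReal.ofReal |f8 y| ∂μ8 = 0 := by
      rw [← lintegral_indicator ((Metric.ball z s).to_countable.measurableSet)]
      simp [hzero]
    rw [hI, mul_zero]
    exact zero_le
  obtain ⟨n, hn, hnB⟩ := hex
  have hx1 : |(-1:ℝ) - z.1| < s ∧ |(0:ℝ) - z.2| < s := by
    have := (ball8 _ _ _).1 hx; push_cast at this; exact this
  have hn1 : |(n:ℝ) - z.1| < s := by
    have := ((ball8 _ _ _).1 hnB).1; push_cast at this; exact this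
  rw [abs_sub_lt_iff] at hn1
  obtain ⟨hxa, hxb⟩ := hx1
  rw [abs_sub_lt_iff] at hxa hxb
  have hzs1 : (z.1:ℝ) < s - 1 := by have := hxa.2; linarith
  have hzs2 : (1:ℝ) - s < z.1 := by
    have := hn1.2
    have hn' : (1:ℝ) ≤ n := by exact_mod_cast hn
    linarith
  have hs1 : 1 < s := by linarith
  have hb : |(z.2:ℝ)| < s := by
    rw [abs_lt]
    constructor
    · linarith [hxb.2]
    · linarith [hxb.1]
  -- the integer M
  set M : ℕ := (⌈s⌉ - 1).toNat with hMdef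
  have hceil1 : (1:ℤ) ≤ ⌈s⌉ := by
    have h1 := Int.le_ceil s
    have h2 : (1:ℝ) < ⌈s⌉ := lt_of_lt_of_le hs1 h1
    exact_mod_cast h2.le
  have hM : (M:ℤ) = ⌈s⌉ - 1 := Int.toNat_of_nonneg (by omega)
  have hMs : (M:ℝ) < s := by
    have h1 : ((M:ℤ):ℝ) = (⌈s⌉:ℝ) - 1 := by rw [hM]; push_cast; ring
    have h2 : (⌈s⌉:ℝ) < s + 1 := Int.ceil_lt_add_one s
    push_cast at h1
    linarith
  have hMs2 : s ≤ (M:ℝ) + 1 := by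
    have h1 : ((M:ℤ):ℝ) = (⌈s⌉:ℝ) - 1 := by rw [hM]; push_cast; ring
    have h2 : s ≤ (⌈s⌉:ℝ) := Int.le_ceil s
    push_cast at h1
    linarith
  -- heavy point
  set m : ℤ := if 0 ≤ z.2 then (M:ℤ) else -(M:ℤ) with hmdef
  have hmabs : m.natAbs = M := by
    rw [hmdef]; split <;> simp
  have hM0 : (0:ℝ) ≤ (M:ℝ) := Nat.cast_nonneg M
  have hmB : (((0:ℤ), m) : ℤ × ℤ) ∈ Metric.ball z s := by
    rw [ball8]
    refine ⟨?_, ?_⟩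
    · push_cast
      rw [abs_sub_lt_iff]
      constructor <;> linarith
    · rw [abs_sub_lt_iff]
      rw [hmdef]
      rcases le_or_gt 0 z.2 with hb0 | hb0
      · rw [if_pos hb0]
        have hb0' : (0:ℝ) ≤ (z.2:ℝ) := by exact_mod_cast hb0
        push_cast
        constructor <;> linarith [abs_lt.1 hb]
      · rw [if_neg (not_le.2 hb0)]
        have hb0' : (z.2:ℝ) < 0 := by exact_mod_cast hb0
        push_cast
        constructor <;> linarith [abs_lt.1 hb]
  have hμ : (4:ℝ≥0∞) ^ M ≤ μ8 (Metric.ball z s) := by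
    have h1 : μ8 {(((0:ℤ), m) : ℤ × ℤ)} ≤ μ8 (Metric.ball z s) :=
      measure_mono (Set.singleton_subset_iff.2 hmB)
    rwa [mu8_singleton, w8, if_pos rfl, hmabs] at h1
  -- integral bound
  have hint : ∫⁻ y in Metric.ball z s, ENNReal.ofReal |f8 y| ∂μ8 ≤ (4:ℝ≥0∞) ^ (M + 1) := by
    set G : Finset (ℤ × ℤ) :=
      Finset.image (fun j : ℕ => ((j:ℤ), (0:ℤ))) (Finset.range (2*M+2)) with hGdef
    have hind : ∀ y, (Metric.ball z s).indicator (fun y => ENNReal.ofReal |f8 y|) y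
        ≤ (↑G : Set (ℤ × ℤ)).indicator (fun y => ENNReal.ofReal |f8 y|) y := by
      intro y
      by_cases hyB : y ∈ Metric.ball z s
      · rw [Set.indicator_of_mem hyB]
        by_cases hy : 0 < y.1 ∧ y.2 = 0
        · have hyG : y ∈ (↑G : Set (ℤ × ℤ)) := by
            rw [ball8] at hyB
            have hy1 : (y.1:ℝ) - z.1 < s := (abs_sub_lt_iff.1 hyB.1).1
            have hy1' : (y.1:ℝ) < 2 * (M:ℝ) + 1 := by linarith
            have hyM : y.1 < 2 * (M:ℤ) + 1 := by exact_mod_cast hy1'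
            simp only [hGdef, Finset.coe_image, Set.mem_image, Finset.mem_coe,
              Finset.mem_range]
            refine ⟨y.1.toNat, ?_, ?_⟩
            · omega
            · have he : ((y.1.toNat : ℤ)) = y.1 := Int.toNat_of_nonneg hy.1.le
              exact Prod.ext he hy.2.symm
          rw [Set.indicator_of_mem hyG]
        · simp [f8, hy]
      · rw [Set.indicator_of_notMem hyB]
        exact zero_le
    calc ∫⁻ y in Metric.ball z s, ENNReal.ofReal |f8 y| ∂μ8
        = ∫⁻ y, (Metric.ball z s).indicator (fun y => ENNReal.ofReal |f8 y|) y ∂μ8 := by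
          rw [lintegral_indicator ((Metric.ball z s).to_countable.measurableSet)]
      _ ≤ ∫⁻ y, (↑G : Set (ℤ × ℤ)).indicator (fun y => ENNReal.ofReal |f8 y|) y ∂μ8 :=
          lintegral_mono hind
      _ = ∫⁻ y in (↑G : Set (ℤ × ℤ)), ENNReal.ofReal |f8 y| ∂μ8 := by
          rw [lintegral_indicator (G.countable_toSet.measurableSet)]
      _ = ∑ y ∈ G, ENNReal.ofReal |f8 y| * μ8 {y} := lintegral_finset _ _
      _ ≤ (4:ℝ≥0∞) ^ (M + 1) := by
          rw [hGdef, Finset.sum_image (by intro a _ b _ hab; simpa using hab)]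
          have hterm : ∀ j ∈ Finset.range (2*M+2),
              ENNReal.ofReal |f8 ((j:ℤ), (0:ℤ))| * μ8 {(((j:ℤ), (0:ℤ)) : ℤ × ℤ)}
                ≤ (2:ℝ≥0∞) ^ j := by
            intro j _
            have hμ1 : μ8 {(((j:ℤ), (0:ℤ)) : ℤ × ℤ)} = 1 := by
              rw [mu8_singleton, w8]
              by_cases hj : (j:ℤ) = 0 <;> simp [hj]
            rw [hμ1, mul_one]
            by_cases hj : 0 < (j:ℤ)
            · have hfj : f8 ((j:ℤ), (0:ℤ)) = 2 ^ j := by have hj' : j ≠ 0 := (by omega); simp [f8, hj, hj']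
              rw [hfj, abs_of_nonneg (by positivity), ENNReal.ofReal_pow (by norm_num)]
              norm_num
            · have hfj : f8 ((j:ℤ), (0:ℤ)) = 0 := by simp [f8, hj]; omega
              rw [hfj]
              simp
          calc ∑ j ∈ Finset.range (2*M+2), ENNReal.ofReal |f8 ((j:ℤ), (0:ℤ))|
                * μ8 {(((j:ℤ), (0:ℤ)) : ℤ × ℤ)}
              ≤ ∑ j ∈ Finset.range (2*M+2), (2:ℝ≥0∞) ^ j := Finset.sum_le_sum hterm
            _ ≤ (2:ℝ≥0∞) ^ (2*M+2) := geom8 _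
            _ = (4:ℝ≥0∞) ^ (M + 1) := by
                rw [show (4:ℝ≥0∞) = 2^2 by norm_num, ← pow_mul]
                ring_nf
  calc (μ8 (Metric.ball z s))⁻¹ * ∫⁻ y in Metric.ball z s, ENNReal.ofReal |f8 y| ∂μ8
      ≤ ((4:ℝ≥0∞) ^ M)⁻¹ * (4:ℝ≥0∞) ^ (M + 1) := mul_le_mul' (ENNReal.inv_le_inv.2 hμ) hint
    _ = 4 := by
        rw [pow_succ, ← mul_assoc, ENNReal.inv_mul_cancel (by positivity)
          (ENNReal.pow_ne_top (by norm_num)), one_mul]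

theorem stmt_8 : maxN8 (1, 0) = ⊤ ∧ maxN8 (-1, 0) < ⊤ := by
  exact ⟨part1_8, lt_of_le_of_lt part2_8 (by norm_num)⟩
end

section
/- Fix τ ∈ ℕ, d ∈ (1,2], and m ∈ [1,∞). Let S = {x₀, x₁, …, x_τ} with metric ρ(x,y) = 1 if x₀ ∈ {x,y} and ρ(x,y) = d otherwise (for x ≠ y), and measure μ({x₀}) = 1, μ({x_i}) = m for i ∈ {1,…,τ}. Let g = 𝟙_{{x₀}}. Then for every κ ∈ [1, d) and p ∈ [1, ∞), the modified centered maximal operator M_κ satisfies: ‖g‖_{L^p(μ)} = 1, M_κ g(x_i) ≥ 1/(m+1) for each i ∈ {1,…,τ}, and consequently the weak-type (p,p) constant of M_κ on this space is at least (1/(2m)) · (τ m)^{1/p} = (1/2) τ^{1/p} m^{1/p − 1}. -/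
open MeasureTheory
open scoped ENNReal

/-- The modified centered Hardy–Littlewood maximal operator
`M_κ f(x) = sup_{s>0} (1/μ(B(x,κs))) ∫_{B(x,s)} |f| dμ`. -/
noncomputable def modMaxC {X : Type*} [MetricSpace X] [MeasurableSpace X]
    (μ : Measure X) (κ : ℝ) (f : X → ℝ) (x : X) : ℝ≥0∞ :=
  ⨆ (s : ℝ) (_ : 0 < s),
    (μ (Metric.ball x (κ * s)))⁻¹ * ∫⁻ y in Metric.ball x s, ENNReal.ofReal |f y| ∂μ

theorem stmt_10 {X : Type*} [MetricSpace X] [MeasurableSpace X] [MeasurableSingletonClass X]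
    (τ : ℕ) (hτ : 1 ≤ τ) (d m : ℝ) (hd1 : 1 < d) (hd2 : d ≤ 2) (hm : 1 ≤ m)
    (x : Fin (τ + 1) → X) (hbij : Function.Bijective x)
    (hdist : ∀ i j : Fin (τ + 1), i ≠ j →
      dist (x i) (x j) = if i = 0 ∨ j = 0 then 1 else d)
    (μ : Measure X)
    (hμ : ∀ i : Fin (τ + 1), μ {x i} = if i = 0 then 1 else ENNReal.ofReal m)
    (κ p : ℝ) (hκ1 : 1 ≤ κ) (hκd : κ < d) (hp : 1 ≤ p)
    (g : X → ℝ) (hg : g = Set.indicator {x 0} fun _ => (1 : ℝ)) :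
    (∫⁻ y, ENNReal.ofReal (|g y| ^ p) ∂μ) = 1 ∧
    (∀ i : Fin (τ + 1), i ≠ 0 →
      ENNReal.ofReal (1 / (m + 1)) ≤ modMaxC μ κ g (x i)) ∧
    (∀ C : ℝ≥0∞,
      (∀ (f : X → ℝ) (lam : ℝ≥0∞),
        lam * (μ {y | lam < modMaxC μ κ f y}) ^ (1 / p)
          ≤ C * (∫⁻ y, ENNReal.ofReal (|f y| ^ p) ∂μ) ^ (1 / p)) →
      ENNReal.ofReal ((1 / (2 * m)) * ((τ : ℝ) * m) ^ (1 / p)) ≤ C) := by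
  have hm0 : (0:ℝ) < m := lt_of_lt_of_le one_pos hm
  have hκ0 : (0:ℝ) < κ := lt_of_lt_of_le one_pos hκ1
  have hp0 : (0:ℝ) < p := lt_of_lt_of_le one_pos hp
  have hμ0 : μ {x 0} = 1 := by simpa using hμ 0
  have hμi : ∀ i : Fin (τ+1), i ≠ 0 → μ {x i} = ENNReal.ofReal m := by
    intro i hi; simpa [hi] using hμ i
  -- Part 1
  have hint : (∫⁻ y, ENNReal.ofReal (|g y| ^ p) ∂μ) = 1 := by
    have heq : (fun y => ENNReal.ofReal (|g y| ^ p)) =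
        Set.indicator {x 0} (fun _ => (1:ℝ≥0∞)) := by
      funext y
      by_cases hy : y ∈ ({x 0} : Set X)
      · simp [hg, Set.indicator_of_mem hy]
      · simp [hg, Set.indicator_of_notMem hy, Real.zero_rpow (ne_of_gt hp0)]
    rw [heq]
    rw [show (∫⁻ y, Set.indicator {x 0} (fun _ => (1:ℝ≥0∞)) y ∂μ) =
        ∫⁻ y in {x 0}, (1:ℝ≥0∞) ∂μ from
      lintegral_indicator (measurableSet_singleton _) _]
    simp [hμ0]
  -- Part 2
  have hM : ∀ i : Fin (τ + 1), i ≠ 0 →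
      ENNReal.ofReal (1 / (m + 1)) ≤ modMaxC μ κ g (x i) := by
    intro i hi
    set s₀ := d / κ with hs₀
    have hs₀1 : 1 < s₀ := (one_lt_div hκ0).2 hκd
    have hs₀pos : 0 < s₀ := lt_trans one_pos hs₀1
    have hκs : κ * s₀ = d := by rw [hs₀]; field_simp
    have hx0i : dist (x 0) (x i) = 1 := by
      have := hdist 0 i (Ne.symm hi); simpa using this
    have hball_sub : Metric.ball (x i) (κ * s₀) ⊆ {x 0, x i} := by
      rw [hκs]
      intro y hy
      obtain ⟨j, rfl⟩ := hbij.2 y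
      rcases eq_or_ne j i with rfl | hji
      · exact Or.inr rfl
      rcases eq_or_ne j 0 with rfl | hj0
      · exact Or.inl rfl
      · exfalso
        have hdj := hdist j i hji
        rw [if_neg (by tauto)] at hdj
        have hlt : dist (x j) (x i) < d := by simpa [Metric.mem_ball] using hy
        rw [hdj] at hlt
        exact lt_irrefl _ hlt
    have hmub : μ (Metric.ball (x i) (κ * s₀)) ≤ ENNReal.ofReal (m + 1) := by
      refine le_trans (measure_mono hball_sub) ?_
      have hpair : ({x 0, x i} : Set X) = {x 0} ∪ {x i} := Set.insert_eq _ _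
      rw [hpair]
      refine le_trans (measure_union_le _ _) ?_
      rw [hμ0, hμi i hi, ENNReal.ofReal_add (by linarith) (by norm_num)]
      rw [add_comm]
      simp
    have hinv : ENNReal.ofReal (1 / (m + 1)) ≤ (μ (Metric.ball (x i) (κ * s₀)))⁻¹ := by
      calc ENNReal.ofReal (1 / (m + 1)) = (ENNReal.ofReal (m + 1))⁻¹ := by
            rw [one_div, ENNReal.ofReal_inv_of_pos (by linarith)]
        _ ≤ (μ (Metric.ball (x i) (κ * s₀)))⁻¹ := ENNReal.inv_le_inv' hmub
    have hintlb : 1 ≤ ∫⁻ y in Metric.ball (x i) s₀, ENNReal.ofReal |g y| ∂μ := by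
      have hx0mem : x 0 ∈ Metric.ball (x i) s₀ := by
        rw [Metric.mem_ball, dist_comm, dist_comm (x i) (x 0), hx0i]
        exact hs₀1
      have hsub : ({x 0} : Set X) ⊆ Metric.ball (x i) s₀ := by
        simpa using hx0mem
      calc (1:ℝ≥0∞) = ∫⁻ y in ({x 0} : Set X), ENNReal.ofReal |g y| ∂μ := by
            rw [lintegral_singleton, hμ0, hg]
            simp
        _ ≤ _ := lintegral_mono_set hsub
    calc ENNReal.ofReal (1 / (m + 1))
        = ENNReal.ofReal (1 / (m + 1)) * 1 := (mul_one _).symm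
      _ ≤ (μ (Metric.ball (x i) (κ * s₀)))⁻¹ *
            ∫⁻ y in Metric.ball (x i) s₀, ENNReal.ofReal |g y| ∂μ :=
          mul_le_mul' hinv hintlb
      _ ≤ modMaxC μ κ g (x i) := le_iSup₂_of_le s₀ hs₀pos le_rfl
  refine ⟨hint, hM, ?_⟩
  -- Part 3
  intro C hC
  have hτm : (0:ℝ) < (τ:ℝ) * m := by
    have : (1:ℝ) ≤ (τ:ℝ) := by exact_mod_cast hτ
    nlinarith
  set B : ℝ≥0∞ := ENNReal.ofReal (((τ:ℝ) * m) ^ (1/p)) with hB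
  have hB0 : B ≠ 0 := by
    simp only [hB, ne_eq, ENNReal.ofReal_eq_zero, not_le]
    positivity
  have hBtop : B ≠ ⊤ := ENNReal.ofReal_ne_top
  have hgoal : ENNReal.ofReal ((1 / (2 * m)) * ((τ : ℝ) * m) ^ (1 / p)) =
      ENNReal.ofReal (1 / (2 * m)) * B := by
    rw [hB, ← ENNReal.ofReal_mul (by positivity)]
  rw [hgoal]
  refine ENNReal.le_of_forall_nnreal_lt ?_
  intro r hr
  set lam : ℝ≥0∞ := (r : ℝ≥0∞) / B with hlamdef
  have hlam : lam < ENNReal.ofReal (1 / (2 * m)) := by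
    rw [hlamdef, ENNReal.div_lt_iff (Or.inl hB0) (Or.inl hBtop)]
    exact hr
  have hlam' : lam < ENNReal.ofReal (1 / (m + 1)) := by
    refine lt_of_lt_of_le hlam (ENNReal.ofReal_le_ofReal ?_)
    rw [div_le_div_iff₀ (by linarith) (by linarith)]
    nlinarith
  have hmem : ∀ i : Fin (τ+1), i ≠ 0 → x i ∈ {y | lam < modMaxC μ κ g y} :=
    fun i hi => lt_of_lt_of_le hlam' (hM i hi)
  -- measure lower bound
  set S := {y | lam < modMaxC μ κ g y} with hS
  have hμS : ENNReal.ofReal ((τ:ℝ) * m) ≤ μ S := by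
    set F : Finset (Fin (τ+1)) := Finset.univ.filter (· ≠ 0) with hF
    have hsub : (⋃ i ∈ F, ({x i} : Set X)) ⊆ S := by
      intro y hy
      simp only [Set.mem_iUnion, Set.mem_singleton_iff] at hy
      obtain ⟨i, hiF, rfl⟩ := hy
      have hi : i ≠ 0 := by simpa [hF] using hiF
      exact hmem i hi
    have hdisj : (F : Set (Fin (τ+1))).PairwiseDisjoint (fun i => ({x i} : Set X)) := by
      intro a _ b _ hab
      simp only [Function.onFun, Set.disjoint_singleton]
      exact fun h => hab (hbij.1 h)
    have hcount : μ (⋃ i ∈ F, ({x i} : Set X)) = ∑ i ∈ F, μ {x i} :=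
      measure_biUnion_finset hdisj (fun i _ => measurableSet_singleton _)
    have hsum : ∑ i ∈ F, μ {x i} = (τ : ℝ≥0∞) * ENNReal.ofReal m := by
      have : ∀ i ∈ F, μ {x i} = ENNReal.ofReal m := by
        intro i hiF
        exact hμi i (by simpa [hF] using hiF)
      rw [Finset.sum_congr rfl this, Finset.sum_const]
      have hcard : F.card = τ := by
        have : F = Finset.univ \ {0} := by
          ext i; simp [hF]
        rw [this, Finset.card_sdiff_of_subset (by simp)]
        simp
      rw [hcard, nsmul_eq_mul]
    calc ENNReal.ofReal ((τ:ℝ) * m) = (τ : ℝ≥0∞) * ENNReal.ofReal m := by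
          rw [ENNReal.ofReal_mul (by positivity), ENNReal.ofReal_natCast]
      _ = μ (⋃ i ∈ F, ({x i} : Set X)) := by rw [hcount, hsum]
      _ ≤ μ S := measure_mono hsub
  have hBle : B ≤ (μ S) ^ (1/p) := by
    calc B = (ENNReal.ofReal ((τ:ℝ) * m)) ^ (1/p) := by
          rw [hB, ← ENNReal.ofReal_rpow_of_pos hτm]
      _ ≤ (μ S) ^ (1/p) := ENNReal.rpow_le_rpow hμS (by positivity)
  have key := hC g lam
  rw [hint] at key
  simp only [ENNReal.one_rpow, mul_one] at key
  calc (r : ℝ≥0∞) = lam * B := by rw [hlamdef, ENNReal.div_mul_cancel hB0 hBtop]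
    _ ≤ lam * (μ S) ^ (1/p) := mul_le_mul' le_rfl hBle
    _ ≤ C := key
end

section
/- Fix κ ∈ [2, ∞) and n ∈ ℕ. Let J = {x₀, …, x_n} ⊂ ℝ where x_j = Σ_{i=1}^{j} (κ+1)^i, equipped with the Euclidean metric and counting measure. Let g = 𝟙_{{x₀}}. Then for each j ∈ {1, …, n−1} the modified centered maximal function satisfies M_κ g(x_j) ≥ 1/(j+1), and therefore ‖M_κ g‖_{L¹} / ‖g‖_{L¹} ≥ Σ_{j=1}^{n−1} 1/(j+1). In particular, the L¹-operator norm of M_κ on these spaces is unbounded as n → ∞. -/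
open MeasureTheory
open scoped ENNReal

/-- The point `x_j = Σ_{i=1}^{j} (κ+1)^i` of the segment-type space. -/
noncomputable def xpt (κ : ℝ) (j : ℕ) : ℝ := ∑ i ∈ Finset.range j, (κ + 1) ^ (i + 1)

/-- Counting measure on the set `J = {x₀, …, x_n}`. -/
noncomputable def μJ (κ : ℝ) (n : ℕ) : Measure ℝ :=
  Measure.sum fun j : Fin (n + 1) => Measure.dirac (xpt κ j)

/-- The function `g = 𝟙_{{x₀}}`. -/
noncomputable def gJ (κ : ℝ) : ℝ → ℝ := Set.indicator {xpt κ 0} fun _ => (1 : ℝ)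

section aux

variable {κ : ℝ}

lemma xpt_zero (κ : ℝ) : xpt κ 0 = 0 := by simp [xpt]

lemma xpt_succ (κ : ℝ) (j : ℕ) : xpt κ (j + 1) = xpt κ j + (κ + 1) ^ (j + 1) :=
  Finset.sum_range_succ _ _

lemma xpt_strictMono (hκ : 2 ≤ κ) : StrictMono (xpt κ) := by
  apply strictMono_nat_of_lt_succ
  intro j
  rw [xpt_succ]
  nlinarith [pow_pos (by linarith : (0:ℝ) < κ + 1) (j + 1)]

lemma xpt_nonneg (hκ : 2 ≤ κ) (j : ℕ) : 0 ≤ xpt κ j := by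
  rw [← xpt_zero κ]
  exact (xpt_strictMono hκ).monotone (Nat.zero_le j)

lemma xpt_key (hκ : 2 ≤ κ) (j : ℕ) : (κ + 1) ^ (j + 1) = κ * xpt κ j + κ + 1 := by
  induction j with
  | zero => rw [xpt_zero]; ring
  | succ j ih =>
      rw [xpt_succ, pow_succ]
      nlinarith [ih]

lemma mem_ball_iff (hκ : 2 ≤ κ) {i j : ℕ} {r : ℝ} (hr1 : xpt κ j < r)
    (hr2 : r ≤ κ * xpt κ j + κ + 1) :
    xpt κ i ∈ Metric.ball (xpt κ j) r ↔ i ≤ j := by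
  rw [Metric.mem_ball, Real.dist_eq]
  constructor
  · intro h
    by_contra hij
    push_neg at hij
    have h1 : xpt κ (j + 1) ≤ xpt κ i := (xpt_strictMono hκ).monotone hij
    rw [xpt_succ, xpt_key hκ] at h1
    have := abs_lt.mp h
    linarith [this.2]
  · intro h
    have h1 : xpt κ i ≤ xpt κ j := (xpt_strictMono hκ).monotone h
    have h2 : 0 ≤ xpt κ i := xpt_nonneg hκ i
    rw [abs_lt]
    constructor <;> linarith

lemma μJ_apply (κ : ℝ) (n : ℕ) {S : Set ℝ} (hS : MeasurableSet S) :
    μJ κ n S = ∑ i : Fin (n + 1), S.indicator 1 (xpt κ i) := by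
  rw [μJ, Measure.sum_apply _ hS, tsum_fintype]
  simp [Measure.dirac_apply]

lemma μJ_ball (hκ : 2 ≤ κ) {n j : ℕ} (hj : j ≤ n) {r : ℝ} (hr1 : xpt κ j < r)
    (hr2 : r ≤ κ * xpt κ j + κ + 1) :
    μJ κ n (Metric.ball (xpt κ j) r) = (j : ℝ≥0∞) + 1 := by
  classical
  rw [μJ_apply κ n measurableSet_ball]
  have h1 : ∀ i : Fin (n + 1),
      (Metric.ball (xpt κ j) r).indicator (1 : ℝ → ℝ≥0∞) (xpt κ i)
        = if (i : ℕ) ≤ j then 1 else 0 := by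
    intro i
    by_cases h : (i : ℕ) ≤ j
    · rw [Set.indicator_of_mem ((mem_ball_iff hκ hr1 hr2).mpr h), if_pos h]
      rfl
    · rw [Set.indicator_of_notMem (fun hm => h ((mem_ball_iff hκ hr1 hr2).mp hm)), if_neg h]
  rw [Finset.sum_congr rfl fun i _ => h1 i, Fin.sum_univ_eq_sum_range
    (fun i => if i ≤ j then (1 : ℝ≥0∞) else 0), ← Finset.sum_filter]
  have h2 : (Finset.range (n + 1)).filter (fun i => i ≤ j) = Finset.range (j + 1) := by
    ext i
    simp only [Finset.mem_filter, Finset.mem_range]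
    omega
  rw [h2]
  simp

lemma lint_gJ (hκ : 2 ≤ κ) (n : ℕ) {S : Set ℝ} (hS : MeasurableSet S) (h0 : xpt κ 0 ∈ S) :
    ∫⁻ y in S, ENNReal.ofReal |gJ κ y| ∂(μJ κ n) = 1 := by
  classical
  rw [μJ, Measure.restrict_sum _ hS, lintegral_sum_measure, tsum_fintype]
  have h1 : ∀ i : Fin (n + 1),
      ∫⁻ y in S, ENNReal.ofReal |gJ κ y| ∂(Measure.dirac (xpt κ (i : ℕ)))
        = if (i : ℕ) = 0 then 1 else 0 := by
    intro i
    rw [setLIntegral_dirac]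
    by_cases h : (i : ℕ) = 0
    · rw [if_pos h]
      have hx : xpt κ (i : ℕ) = xpt κ 0 := by rw [h]
      rw [hx, if_pos h0]
      simp [gJ]
    · rw [if_neg h]
      have hne : xpt κ (i : ℕ) ∉ ({xpt κ 0} : Set ℝ) := by
        simp only [Set.mem_singleton_iff]
        exact fun he => h ((xpt_strictMono hκ).injective he)
      have hg : gJ κ (xpt κ (i : ℕ)) = 0 := Set.indicator_of_notMem hne _
      rw [hg]
      simp
  rw [Finset.sum_congr rfl fun i _ => h1 i,
    Fin.sum_univ_eq_sum_range (fun i => if i = 0 then (1 : ℝ≥0∞) else 0),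
    Finset.sum_ite_eq' (Finset.range (n + 1)) 0 (fun _ => 1),
    if_pos (Finset.mem_range.mpr n.succ_pos)]

lemma modMaxC_lower (hκ : 2 ≤ κ) {n j : ℕ} (hj : j ≤ n) :
    ENNReal.ofReal (1 / (j + 1 : ℝ)) ≤ modMaxC (μJ κ n) κ (gJ κ) (xpt κ j) := by
  set s : ℝ := xpt κ j + 1 with hs_def
  have hx0 : 0 ≤ xpt κ j := xpt_nonneg hκ j
  have hs : 0 < s := by positivity
  have hball : μJ κ n (Metric.ball (xpt κ j) (κ * s)) = (j : ℝ≥0∞) + 1 := by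
    apply μJ_ball hκ hj
    · nlinarith
    · nlinarith
  have hint : ∫⁻ y in Metric.ball (xpt κ j) s, ENNReal.ofReal |gJ κ y| ∂(μJ κ n) = 1 := by
    apply lint_gJ hκ n measurableSet_ball
    rw [xpt_zero, Metric.mem_ball, Real.dist_eq]
    rw [abs_of_nonpos (by linarith)]
    simp only [neg_sub, zero_sub, neg_neg]
    linarith
  have hterm : (μJ κ n (Metric.ball (xpt κ j) (κ * s)))⁻¹ *
      ∫⁻ y in Metric.ball (xpt κ j) s, ENNReal.ofReal |gJ κ y| ∂(μJ κ n)
        = ((j : ℝ≥0∞) + 1)⁻¹ := by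
    rw [hball, hint, mul_one]
  have hle : ENNReal.ofReal (1 / (j + 1 : ℝ)) = ((j : ℝ≥0∞) + 1)⁻¹ := by
    rw [one_div, ENNReal.ofReal_inv_of_pos (by positivity)]
    congr 1
    have : ((j : ℝ) + 1) = ((j + 1 : ℕ) : ℝ) := by push_cast; ring
    rw [this, ENNReal.ofReal_natCast]
    push_cast
    ring
  rw [hle, ← hterm]
  exact le_iSup₂ (f := fun (s : ℝ) (_ : 0 < s) =>
    (μJ κ n (Metric.ball (xpt κ j) (κ * s)))⁻¹ *
      ∫⁻ y in Metric.ball (xpt κ j) s, ENNReal.ofReal |gJ κ y| ∂(μJ κ n)) s hs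

end aux

theorem stmt_12 (κ : ℝ) (hκ : 2 ≤ κ) (n : ℕ) (hn : 1 ≤ n) :
    (∫⁻ y, ENNReal.ofReal |gJ κ y| ∂(μJ κ n)) = 1 ∧
    (∀ j : ℕ, 1 ≤ j → j ≤ n - 1 →
      ENNReal.ofReal (1 / (j + 1 : ℝ)) ≤ modMaxC (μJ κ n) κ (gJ κ) (xpt κ j)) ∧
    ENNReal.ofReal (∑ j ∈ Finset.Icc 1 (n - 1), (1 : ℝ) / (j + 1))
      ≤ ∫⁻ y, modMaxC (μJ κ n) κ (gJ κ) y ∂(μJ κ n) := by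
  refine ⟨?_, ?_, ?_⟩
  · have := lint_gJ hκ n MeasurableSet.univ (Set.mem_univ (xpt κ 0))
    rwa [Measure.restrict_univ] at this
  · intro j hj1 hj2
    exact modMaxC_lower hκ (by omega)
  · have heq : ∫⁻ y, modMaxC (μJ κ n) κ (gJ κ) y ∂(μJ κ n)
        = ∑ i ∈ Finset.range (n + 1), modMaxC (μJ κ n) κ (gJ κ) (xpt κ i) := by
      have h1 : ∫⁻ y, modMaxC (μJ κ n) κ (gJ κ) y ∂(μJ κ n)
          = ∑' i : Fin (n + 1), ∫⁻ y, modMaxC (μJ κ n) κ (gJ κ) y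
              ∂(Measure.dirac (xpt κ (i : ℕ))) :=
        lintegral_sum_measure _ _
      rw [h1, tsum_fintype]
      simp only [lintegral_dirac]
      exact Fin.sum_univ_eq_sum_range (fun i => modMaxC (μJ κ n) κ (gJ κ) (xpt κ i)) _
    rw [heq]
    calc ENNReal.ofReal (∑ j ∈ Finset.Icc 1 (n - 1), (1 : ℝ) / (j + 1))
        = ∑ j ∈ Finset.Icc 1 (n - 1), ENNReal.ofReal ((1 : ℝ) / (j + 1)) := by
          rw [ENNReal.ofReal_sum_of_nonneg]
          intro j _
          positivity
      _ ≤ ∑ j ∈ Finset.Icc 1 (n - 1), modMaxC (μJ κ n) κ (gJ κ) (xpt κ j) := by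
          apply Finset.sum_le_sum
          intro j hj
          rw [Finset.mem_Icc] at hj
          exact modMaxC_lower hκ (by omega)
      _ ≤ ∑ i ∈ Finset.range (n + 1), modMaxC (μJ κ n) κ (gJ κ) (xpt κ i) := by
          apply Finset.sum_le_sum_of_subset
          intro j hj
          rw [Finset.mem_Icc] at hj
          rw [Finset.mem_range]
          omega
end

section
/- Fix p ∈ (1, ∞), q ∈ [1, ∞], and n₀ ∈ ℕ. Let (X, μ) be a measure space and (f_n)_{n=1}^{n₀} measurable functions with pairwise disjoint supports A_n ⊆ X, such that for each n ≥ 2 and every t > 0, the distribution function d_{f_n}(t) = μ({|f_n| > t}) satisfies either d_{f_n}(t) ≥ μ(A_1 ∪ ⋯ ∪ A_{n−1}) or d_{f_n}(t) = 0. Then, for q < ∞, the Lorentz quasinorm of the sum is comparable to the ℓ^q sum of the individual quasinorms: there is a constant C = C(p,q), independent of X, n₀, and the f_n, with C^{−1} (Σ_{n=1}^{n₀} ‖f_n‖_{p,q}^q)^{1/q} ≤ ‖Σ_{n=1}^{n₀} f_n‖_{p,q} ≤ C (Σ_{n=1}^{n₀} ‖f_n‖_{p,q}^q)^{1/q}.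 -/
open MeasureTheory
open scoped ENNReal

/-- The Lorentz quasinorm `‖f‖_{p,q} = p^{1/q} (∫_0^∞ (t · d_f(t)^{1/p})^q dt/t)^{1/q}`
(for finite `q`), expressed via the distribution function `d_f(t) = μ({|f| > t})`. -/
noncomputable def lorentzNormR {X : Type*} [MeasurableSpace X] (μ : Measure X)
    (p q : ℝ) (f : X → ℝ) : ℝ≥0∞ :=
  ENNReal.ofReal p ^ (1 / q) *
    (∫⁻ t in Set.Ioi (0 : ℝ),
        (ENNReal.ofReal t * μ {x | t < |f x|} ^ (1 / p)) ^ q / ENNReal.ofReal t) ^ (1 / q)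

lemma key_const (r : ℝ) (hr : 0 < r) :
    (1 - (2:ℝ≥0∞)^(-r))⁻¹ * (2:ℝ≥0∞)^(-r) + 1 = (1 - (2:ℝ≥0∞)^(-r))⁻¹ := by
  set x : ℝ≥0∞ := (2:ℝ≥0∞)^(-r) with hx
  have hx1 : x < 1 := ENNReal.rpow_lt_one_of_one_lt_of_neg (by norm_num) (neg_lt_zero.mpr hr)
  have h0 : 1 - x ≠ 0 := by simp [tsub_eq_zero_iff_le, not_le, hx1]
  have htop : (1 - x) ≠ ⊤ := (lt_of_le_of_lt tsub_le_self ENNReal.one_lt_top).ne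
  calc (1-x)⁻¹ * x + 1 = (1-x)⁻¹ * x + (1-x)⁻¹ * (1-x) := by
        rw [ENNReal.inv_mul_cancel h0 htop]
    _ = (1-x)⁻¹ * (x + (1-x)) := by rw [mul_add]
    _ = (1-x)⁻¹ := by rw [add_tsub_cancel_of_le hx1.le, mul_one]

lemma stack_sum_rpow_le (r : ℝ) (hr : 0 < r) (N : ℕ) (a : ℕ → ℝ≥0∞)
    (h : ∀ n < N, a n = 0 ∨ ∑ m ∈ Finset.range n, a m ≤ a n) :
    ∑ n ∈ Finset.range N, (a n)^r ≤ (1 - (2:ℝ≥0∞)^(-r))⁻¹ * (∑ n ∈ Finset.range N, a n)^r := by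
  set c : ℝ≥0∞ := (1 - (2:ℝ≥0∞)^(-r))⁻¹ with hc
  induction N with
  | zero => simp
  | succ N ih =>
    have ih' := ih (fun n hn => h n (hn.trans (Nat.lt_succ_self N)))
    rcases h N (Nat.lt_succ_self N) with h0 | hge
    · rw [Finset.sum_range_succ, Finset.sum_range_succ, h0, ENNReal.zero_rpow_of_pos hr,
        add_zero, add_zero]
      exact ih'
    · set S := ∑ m ∈ Finset.range N, a m with hS
      set T := ∑ m ∈ Finset.range (N+1), a m with hT
      have hTS : T = S + a N := Finset.sum_range_succ a N
      have hST : S ≤ T / 2 := by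
        refine (ENNReal.le_div_iff_mul_le (Or.inl (by norm_num)) (Or.inl (by norm_num))).2 ?_
        rw [hTS, mul_comm, two_mul]
        exact add_le_add le_rfl hge
      have haT : a N ≤ T := hTS ▸ le_add_self
      calc ∑ n ∈ Finset.range (N+1), (a n)^r = (∑ n ∈ Finset.range N, (a n)^r) + (a N)^r :=
            Finset.sum_range_succ _ N
        _ ≤ c * S^r + T^r := add_le_add ih' (ENNReal.rpow_le_rpow haT hr.le)
        _ ≤ c * (T/2)^r + T^r := by
            gcongr
        _ = c * (T^r * (2:ℝ≥0∞)^(-r)) + T^r := by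
            rw [div_eq_mul_inv, ENNReal.mul_rpow_of_nonneg _ _ hr.le, ENNReal.inv_rpow,
              ← ENNReal.rpow_neg]
        _ = (c * (2:ℝ≥0∞)^(-r) + 1) * T^r := by ring
        _ = c * T^r := by rw [key_const r hr]

lemma stack_rpow_sum_le (r : ℝ) (hr : 0 < r) (N : ℕ) (a : ℕ → ℝ≥0∞)
    (h : ∀ n < N, a n = 0 ∨ ∑ m ∈ Finset.range n, a m ≤ a n) :
    (∑ n ∈ Finset.range N, a n)^r ≤ (2:ℝ≥0∞)^r * ∑ n ∈ Finset.range N, (a n)^r := by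
  induction N with
  | zero => simp [ENNReal.zero_rpow_of_pos hr]
  | succ N ih =>
    have ih' := ih (fun n hn => h n (hn.trans (Nat.lt_succ_self N)))
    rcases h N (Nat.lt_succ_self N) with h0 | hge
    · rw [Finset.sum_range_succ, Finset.sum_range_succ, h0, ENNReal.zero_rpow_of_pos hr,
        add_zero, add_zero]
      exact ih'
    · have hT : ∑ n ∈ Finset.range (N+1), a n ≤ 2 * a N := by
        rw [Finset.sum_range_succ, two_mul]
        exact add_le_add hge le_rfl
      calc (∑ n ∈ Finset.range (N+1), a n)^r ≤ (2 * a N)^r := ENNReal.rpow_le_rpow hT hr.le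
        _ = (2:ℝ≥0∞)^r * (a N)^r := ENNReal.mul_rpow_of_nonneg _ _ hr.le
        _ ≤ (2:ℝ≥0∞)^r * ∑ n ∈ Finset.range (N+1), (a n)^r := by
            gcongr
            exact Finset.single_le_sum (f := fun n => (a n)^r) (fun i _ => zero_le)
              (Finset.self_mem_range_succ N)

theorem stmt_14 (p q : ℝ) (hp : 1 < p) (hq : 1 ≤ q) :
    ∃ C : ℝ≥0∞, 0 < C ∧ C < ⊤ ∧
      ∀ (X : Type) [MeasurableSpace X], ∀ (μ : Measure X) (n₀ : ℕ)
        (f : Fin n₀ → X → ℝ) (A : Fin n₀ → Set X),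
        (∀ n, Measurable (f n)) →
        (∀ n, MeasurableSet (A n)) →
        (∀ n, Function.support (f n) ⊆ A n) →
        (Pairwise fun n m => Disjoint (A n) (A m)) →
        (∀ n : Fin n₀, 1 ≤ (n : ℕ) → ∀ t : ℝ, 0 < t →
          μ {x | t < |f n x|} = 0 ∨
            μ (⋃ m : Fin n₀, ⋃ (_ : m < n), A m) ≤ μ {x | t < |f n x|}) →
        C⁻¹ * (∑ n, lorentzNormR μ p q (f n) ^ q) ^ (1 / q)
            ≤ lorentzNormR μ p q (fun x => ∑ n, f n x) ∧
          lorentzNormR μ p q (fun x => ∑ n, f n x)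
            ≤ C * (∑ n, lorentzNormR μ p q (f n) ^ q) ^ (1 / q) := by
  have hp0 : (0:ℝ) < p := lt_trans one_pos hp
  have hq0 : (0:ℝ) < q := lt_of_lt_of_le one_pos hq
  set r : ℝ := q / p with hrdef
  have hr : 0 < r := div_pos hq0 hp0
  set K : ℝ≥0∞ := max ((2:ℝ≥0∞)^r) ((1 - (2:ℝ≥0∞)^(-r))⁻¹) with hKdef
  have h2r0 : (0:ℝ≥0∞) < 2^r := ENNReal.rpow_pos (by norm_num) (by norm_num)
  have hK0 : 0 < K := lt_of_lt_of_le h2r0 (le_max_left _ _)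
  have hKtop : K < ⊤ := by
    apply max_lt (ENNReal.rpow_lt_top_of_nonneg hr.le (by norm_num))
    rw [ENNReal.inv_lt_top, tsub_pos_iff_lt]
    exact ENNReal.rpow_lt_one_of_one_lt_of_neg (by norm_num) (neg_lt_zero.mpr hr)
  refine ⟨K ^ (1/q), ENNReal.rpow_pos hK0 hKtop.ne, ENNReal.rpow_lt_top_of_nonneg
    (by positivity) hKtop.ne, ?_⟩
  intro X mX μ n₀ f A hfm hAm hsupp hdisj hyp
  -- distribution sets
  set E : Fin n₀ → ℝ → Set X := fun n t => {x | t < |f n x|} with hE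
  have hEmeas : ∀ n t, MeasurableSet (E n t) :=
    fun n t => measurableSet_lt measurable_const (hfm n).abs
  have hEsub : ∀ (n : Fin n₀) (t : ℝ), 0 < t → E n t ⊆ A n := by
    intro n t ht x hx
    apply hsupp n
    simp only [Function.mem_support]
    intro h0
    simp only [hE, Set.mem_setOf_eq, h0, abs_zero] at hx
    linarith
  have hEdisj : ∀ t : ℝ, 0 < t → Pairwise (Function.onFun Disjoint (fun n => E n t)) :=
    fun t ht n m hnm => (hdisj hnm).mono (hEsub n t ht) (hEsub m t ht)
  -- the ℕ-indexed sets
  set G : ℕ → ℝ → Set X := fun m t => if h : m < n₀ then E ⟨m, h⟩ t else ∅ with hG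
  have hGE : ∀ (i : Fin n₀) (t : ℝ), G i t = E i t := by
    intro i t; simp [hG, i.isLt]
  have hsum1 : ∀ t : ℝ, ∑ n : Fin n₀, μ (E n t) = ∑ m ∈ Finset.range n₀, μ (G m t) := by
    intro t
    rw [← Fin.sum_univ_eq_sum_range (fun m => μ (G m t)) n₀]
    exact Finset.sum_congr rfl (fun i _ => by rw [hGE])
  have hsum2 : ∀ t : ℝ, ∑ n : Fin n₀, (μ (E n t))^r
      = ∑ m ∈ Finset.range n₀, (μ (G m t))^r := by
    intro t
    rw [← Fin.sum_univ_eq_sum_range (fun m => (μ (G m t))^r) n₀]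
    exact Finset.sum_congr rfl (fun i _ => by rw [hGE])
  -- the sum behaves like one of the f's at each point
  have hone : ∀ (x : X) (n : Fin n₀), f n x ≠ 0 → ∑ m, f m x = f n x := by
    intro x n hn
    refine Finset.sum_eq_single n (fun m _ hm => ?_) (by simp)
    by_contra h0
    have hxA : x ∈ A m := hsupp m (Function.mem_support.mpr h0)
    have hxAn : x ∈ A n := hsupp n (Function.mem_support.mpr hn)
    exact Set.disjoint_left.mp (hdisj hm) hxA hxAn
  have hset : ∀ t : ℝ, 0 < t → {x | t < |∑ n, f n x|} = ⋃ n, E n t := by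
    intro t ht
    ext x
    simp only [Set.mem_setOf_eq, Set.mem_iUnion, hE]
    constructor
    · intro hx
      have hne : ∃ n, f n x ≠ 0 := by
        by_contra h
        push_neg at h
        rw [Finset.sum_congr rfl (fun m _ => h m), Finset.sum_const, smul_zero, abs_zero] at hx
        linarith
      obtain ⟨n, hn⟩ := hne
      exact ⟨n, by rwa [hone x n hn] at hx⟩
    · rintro ⟨n, hn⟩
      have hfnx : f n x ≠ 0 := by
        intro h; rw [h, abs_zero] at hn; linarith
      rwa [hone x n hfnx]
  have hDist : ∀ t : ℝ, 0 < t →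
      μ {x | t < |∑ n, f n x|} = ∑ m ∈ Finset.range n₀, μ (G m t) := by
    intro t ht
    rw [hset t ht, measure_iUnion (hEdisj t ht) (fun n => hEmeas n t), tsum_fintype]
    exact hsum1 t
  -- the stacking property
  have hstack : ∀ t : ℝ, 0 < t → ∀ m < n₀,
      μ (G m t) = 0 ∨ ∑ k ∈ Finset.range m, μ (G k t) ≤ μ (G m t) := by
    intro t ht m hm
    rcases Nat.eq_zero_or_pos m with rfl | hm1
    · right; simp
    · have := hyp ⟨m, hm⟩ hm1 t ht
      have hGm : G m t = E ⟨m, hm⟩ t := by simp [hG, hm]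
      rcases this with h0 | hU
      · left; rw [hGm]; exact h0
      · right
        rw [hGm]
        refine le_trans ?_ hU
        have hdisjG : Set.PairwiseDisjoint (↑(Finset.range m)) (fun k => G k t) := by
          intro i hi j hj hij
          simp only [Finset.coe_range, Set.mem_Iio] at hi hj
          have hi' : i < n₀ := hi.trans hm
          have hj' : j < n₀ := hj.trans hm
          simp only [Function.onFun, hG, dif_pos hi', dif_pos hj']
          exact hEdisj t ht (by simp [Fin.ext_iff, hij])
        have hmeasG : ∀ k ∈ Finset.range m, MeasurableSet (G k t) := by
          intro k hk
          simp only [Finset.mem_range] at hk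
          rw [hG]
          simp only
          rw [dif_pos (hk.trans hm)]
          exact hEmeas _ t
        rw [← measure_biUnion_finset hdisjG hmeasG]
        apply measure_mono
        intro x hx
        simp only [Set.mem_iUnion, Finset.mem_range] at hx ⊢
        obtain ⟨k, hk, hxk⟩ := hx
        have hk' : k < n₀ := hk.trans hm
        refine ⟨⟨k, hk'⟩, ?_, ?_⟩
        · exact Fin.mk_lt_mk.mpr hk
        · apply hEsub ⟨k, hk'⟩ t ht
          have hGk : G k t = E ⟨k, hk'⟩ t := by simp [hG, hk']
          simpa [hGk] using hxk
          
  -- measurability in t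
  have hmonoG : ∀ m : ℕ, Antitone (fun t => μ (G m t)) := by
    intro m s t hst
    by_cases h : m < n₀
    · simp only [hG, dif_pos h]
      apply measure_mono
      intro x hx
      simp only [hE, Set.mem_setOf_eq] at hx ⊢
      linarith
    · simp [hG, h]
  have hmeasG2 : ∀ m : ℕ, Measurable (fun t => μ (G m t)) := fun m => (hmonoG m).measurable
  have hmeasE : ∀ n : Fin n₀, Measurable (fun t => μ (E n t)) := by
    intro n
    have : (fun t => μ (E n t)) = fun t => μ (G n t) := by
      funext t; rw [hGE]
    rw [this]; exact hmeasG2 n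
  -- the weight
  set φ : ℝ → ℝ≥0∞ := fun t => (ENNReal.ofReal t)^q / ENNReal.ofReal t with hφ
  have hφmeas : Measurable φ := by fun_prop
  have hkey : ∀ (w : ℝ≥0∞) (t : ℝ),
      (ENNReal.ofReal t * w ^ (1/p)) ^ q / ENNReal.ofReal t = φ t * w ^ r := by
    intro w t
    rw [ENNReal.mul_rpow_of_nonneg _ _ hq0.le, ← ENNReal.rpow_mul,
      show (1/p) * q = r by rw [hrdef]; ring, hφ]
    simp only [div_eq_mul_inv]
    ring
  -- the integrals
  set I : (X → ℝ) → ℝ≥0∞ := fun g => ∫⁻ t in Set.Ioi (0:ℝ),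
      (ENNReal.ofReal t * μ {x | t < |g x|} ^ (1 / p)) ^ q / ENNReal.ofReal t with hI
  have hlor : ∀ g : X → ℝ, lorentzNormR μ p q g
      = ENNReal.ofReal p ^ (1/q) * (I g) ^ (1/q) := fun g => rfl
  have hIn : ∀ n : Fin n₀, I (f n) = ∫⁻ t in Set.Ioi (0:ℝ), φ t * (μ (E n t))^r := by
    intro n
    exact lintegral_congr (fun t => hkey _ t)
  have hIsum : ∑ n : Fin n₀, I (f n)
      = ∫⁻ t in Set.Ioi (0:ℝ), φ t * ∑ m ∈ Finset.range n₀, (μ (G m t))^r := by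
    rw [Finset.sum_congr rfl (fun n _ => hIn n),
      ← lintegral_finset_sum Finset.univ (f := fun n t => φ t * μ (E n t) ^ r) (fun n _ => (hφmeas.mul ((hmeasE n).pow_const r) :
        Measurable fun t => φ t * μ (E n t) ^ r))]
    exact lintegral_congr (fun t => by rw [← Finset.mul_sum, hsum2 t])
  have hIbig : I (fun x => ∑ n, f n x)
      = ∫⁻ t in Set.Ioi (0:ℝ), φ t * (∑ m ∈ Finset.range n₀, μ (G m t))^r := by
    refine setLIntegral_congr_fun measurableSet_Ioi (fun t ht => ?_)
    beta_reduce
    rw [hkey _ t, hDist t ht]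
  -- comparison of integrals
  have hup : I (fun x => ∑ n, f n x) ≤ K * ∑ n : Fin n₀, I (f n) := by
    rw [hIbig, hIsum, ← lintegral_const_mul' _ _ hKtop.ne]
    refine lintegral_mono_ae ((ae_restrict_iff' measurableSet_Ioi).2 (ae_of_all _ ?_))
    intro t ht
    calc φ t * (∑ m ∈ Finset.range n₀, μ (G m t))^r
        ≤ φ t * ((2:ℝ≥0∞)^r * ∑ m ∈ Finset.range n₀, (μ (G m t))^r) := by
          gcongr
          exact stack_rpow_sum_le r hr n₀ _ (hstack t ht)
      _ ≤ φ t * (K * ∑ m ∈ Finset.range n₀, (μ (G m t))^r) := by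
          gcongr
          exact le_max_left _ _
      _ = K * (φ t * ∑ m ∈ Finset.range n₀, (μ (G m t))^r) := by ring
  have hlow : K⁻¹ * ∑ n : Fin n₀, I (f n) ≤ I (fun x => ∑ n, f n x) := by
    rw [hIbig, hIsum, ← lintegral_const_mul' _ _ (ENNReal.inv_ne_top.2 hK0.ne')]
    refine lintegral_mono_ae ((ae_restrict_iff' measurableSet_Ioi).2 (ae_of_all _ ?_))
    intro t ht
    calc K⁻¹ * (φ t * ∑ m ∈ Finset.range n₀, (μ (G m t))^r)
        ≤ K⁻¹ * (φ t * ((1 - (2:ℝ≥0∞)^(-r))⁻¹ * (∑ m ∈ Finset.range n₀, μ (G m t))^r)) := by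
          gcongr
          exact stack_sum_rpow_le r hr n₀ _ (hstack t ht)
      _ ≤ K⁻¹ * (φ t * (K * (∑ m ∈ Finset.range n₀, μ (G m t))^r)) := by
          gcongr
          exact le_max_right _ _
      _ = (K⁻¹ * K) * (φ t * (∑ m ∈ Finset.range n₀, μ (G m t))^r) := by ring
      _ = φ t * (∑ m ∈ Finset.range n₀, μ (G m t))^r := by
          rw [ENNReal.inv_mul_cancel hK0.ne' hKtop.ne, one_mul]
  -- norm algebra
  have hNq : (∑ n : Fin n₀, lorentzNormR μ p q (f n) ^ q) ^ (1/q)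
      = ENNReal.ofReal p ^ (1/q) * (∑ n : Fin n₀, I (f n)) ^ (1/q) := by
    have h1 : ∀ n : Fin n₀, lorentzNormR μ p q (f n) ^ q = ENNReal.ofReal p * I (f n) := by
      intro n
      rw [hlor, ENNReal.mul_rpow_of_nonneg _ _ hq0.le, ← ENNReal.rpow_mul, ← ENNReal.rpow_mul,
        one_div_mul_cancel hq0.ne', ENNReal.rpow_one, ENNReal.rpow_one]
    rw [Finset.sum_congr rfl (fun n _ => h1 n), ← Finset.mul_sum,
      ENNReal.mul_rpow_of_nonneg _ _ (by positivity : (0:ℝ) ≤ 1/q)]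
  constructor
  · -- lower bound
    rw [hNq, hlor]
    calc (K ^ (1/q))⁻¹ * (ENNReal.ofReal p ^ (1/q) * (∑ n : Fin n₀, I (f n)) ^ (1/q))
        = ENNReal.ofReal p ^ (1/q) * ((K⁻¹)^(1/q) * (∑ n : Fin n₀, I (f n)) ^ (1/q)) := by
          rw [ENNReal.inv_rpow]; ring
      _ = ENNReal.ofReal p ^ (1/q) * (K⁻¹ * ∑ n : Fin n₀, I (f n)) ^ (1/q) := by
          rw [ENNReal.mul_rpow_of_nonneg _ _ (by positivity : (0:ℝ) ≤ 1/q)]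
      _ ≤ ENNReal.ofReal p ^ (1/q) * (I (fun x => ∑ n, f n x)) ^ (1/q) := by
          gcongr
  · -- upper bound
    rw [hNq, hlor]
    calc ENNReal.ofReal p ^ (1/q) * (I (fun x => ∑ n, f n x)) ^ (1/q)
        ≤ ENNReal.ofReal p ^ (1/q) * (K * ∑ n : Fin n₀, I (f n)) ^ (1/q) := by
          gcongr
      _ = K ^ (1/q) * (ENNReal.ofReal p ^ (1/q) * (∑ n : Fin n₀, I (f n)) ^ (1/q)) := by
          rw [ENNReal.mul_rpow_of_nonneg _ _ (by positivity : (0:ℝ) ≤ 1/q)]; ring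
end

section
/- Let (X, ρ, μ) be a metric measure space with 0 < μ(X) < ∞ and such that for every ε > 0 there exists a Borel set E with 0 < μ(E) < ε. Then for every q ∈ (1, ∞] the centered Hardy–Littlewood maximal operator M does not map L^{1,q}(X) into L^{1,r}(X) for any r ∈ [1, ∞]: there exists g ∈ L^{1,q}(X) with Mg(x) = ∞ for every x ∈ X. -/
open MeasureTheory
open scoped ENNReal

/-- The Lorentz quasinorm `‖f‖_{p,q}` of a real-valued function, defined through the
distribution function `d_f(t) = μ({|f| > t})`, with the usual modification for `q = ∞`. -/
noncomputable def lorentzNorm {X : Type*} [MeasurableSpace X] (μ : Measure X)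
    (p : ℝ) (q : ℝ≥0∞) (f : X → ℝ) : ℝ≥0∞ :=
  if q = ⊤ then
    ⨆ (t : ℝ) (_ : 0 < t), ENNReal.ofReal t * μ {x | t < |f x|} ^ (1 / p)
  else
    ENNReal.ofReal p ^ (1 / q.toReal) *
      (∫⁻ t in Set.Ioi (0 : ℝ),
          (ENNReal.ofReal t * μ {x | t < |f x|} ^ (1 / p)) ^ q.toReal /
            ENNReal.ofReal t) ^ (1 / q.toReal)

/-- The centered Hardy–Littlewood maximal function (balls of zero or infinite measure
are omitted from the supremum). -/
noncomputable def cMax {X : Type*} [MetricSpace X] [MeasurableSpace X]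
    (μ : Measure X) (f : X → ℝ) (x : X) : ℝ≥0∞ :=
  ⨆ (s : ℝ) (_ : 0 < s) (_ : 0 < μ (Metric.ball x s)) (_ : μ (Metric.ball x s) < ⊤),
    (μ (Metric.ball x s))⁻¹ * ∫⁻ y in Metric.ball x s, ENNReal.ofReal |f y| ∂μ

section Aux
open Set
open scoped NNReal

lemma exists_seq {X : Type*} [MeasurableSpace X] (μ : Measure X)
    (hsmall : ∀ ε : ℝ≥0∞, 0 < ε → ∃ E : Set X, MeasurableSet E ∧ 0 < μ E ∧ μ E < ε) :
    ∃ A : ℕ → Set X, (∀ n, MeasurableSet (A n)) ∧ (∀ n, 0 < μ (A n)) ∧ (∀ n, μ (A n) < ⊤) ∧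
      (∀ n, 4 * μ (A (n+1)) ≤ μ (A n)) := by
  classical
  set P : Set X → Prop := fun E => MeasurableSet E ∧ 0 < μ E ∧ μ E < ⊤ with hP
  have step : ∀ E : Set X, P E → ∃ E' : Set X, P E' ∧ 4 * μ E' ≤ μ E := by
    rintro E ⟨hEm, hE0, hEt⟩
    obtain ⟨E', h1, h2, h3⟩ := hsmall (μ E / 4) (ENNReal.div_pos hE0.ne' (by norm_num))
    refine ⟨E', ⟨h1, h2, h3.trans (ENNReal.div_lt_top hEt.ne (by norm_num))⟩, ?_⟩
    calc 4 * μ E' ≤ 4 * (μ E / 4) := mul_le_mul_right h3.le 4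
    _ = μ E := ENNReal.mul_div_cancel (by norm_num) (by norm_num)
  choose nxt hnxt using step
  obtain ⟨E0, hE0m, hE0p, hE0t⟩ := hsmall 1 one_pos
  have hPE0 : P E0 := ⟨hE0m, hE0p, hE0t.trans ENNReal.one_lt_top⟩
  let nf : {E : Set X // P E} → {E : Set X // P E} := fun e => ⟨nxt e.1 e.2, (hnxt e.1 e.2).1⟩
  let A : ℕ → {E : Set X // P E} := fun n => nf^[n] ⟨E0, hPE0⟩
  refine ⟨fun n => (A n).1, fun n => (A n).2.1, fun n => (A n).2.2.1, fun n => (A n).2.2.2, ?_⟩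
  intro n
  have hsucc : A (n+1) = nf (A n) := Function.iterate_succ_apply' nf n _
  simp only []
  rw [hsucc]
  exact (hnxt _ _).2

lemma geom_aux : (∑' k : ℕ, (4⁻¹ : ℝ≥0∞) ^ k) ≤ 2 := by
  rw [ENNReal.tsum_geometric]
  have h1 : (1 : ℝ≥0∞) - 4⁻¹ = 3/4 := by
    rw [ENNReal.sub_eq_of_eq_add (by norm_num)]
    rw [show (4⁻¹ : ℝ≥0∞) = 1/4 by rw [one_div], ENNReal.div_add_div_same]
    norm_num
    rw [ENNReal.div_self (by norm_num) (by norm_num)]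
  rw [h1, ENNReal.inv_div (by norm_num) (by norm_num)]
  rw [ENNReal.div_le_iff (by norm_num) (by norm_num)]
  norm_num

lemma tail_aux {a : ℕ → ℝ≥0∞} (h4 : ∀ n, 4 * a (n+1) ≤ a n) :
    ∀ n, (∑' k : ℕ, a (n + k)) ≤ 2 * a n := by
  have hdec : ∀ n k, a (n + k) ≤ a n * 4⁻¹ ^ k := by
    intro n k
    induction k with
    | zero => simp
    | succ k ih =>
      have h1 : a (n + (k+1)) ≤ a (n + k) * 4⁻¹ := by
        rw [← show ((n+k)+1) = n + (k+1) by omega]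
        have := h4 (n + k)
        rw [mul_comm] at this ⊢
        exact (ENNReal.le_div_iff_mul_le (Or.inl (by norm_num)) (Or.inl (by norm_num))).2 this
          |>.trans_eq (by rw [div_eq_mul_inv, mul_comm])
      calc a (n + (k+1)) ≤ a (n + k) * 4⁻¹ := h1
        _ ≤ a n * 4⁻¹ ^ k * 4⁻¹ := mul_le_mul_left ih _
        _ = a n * 4⁻¹ ^ (k+1) := by rw [mul_assoc, ← pow_succ]
  intro n
  calc (∑' k : ℕ, a (n + k)) ≤ ∑' k : ℕ, a n * 4⁻¹ ^ k := ENNReal.tsum_le_tsum (hdec n)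
    _ = a n * ∑' k : ℕ, (4⁻¹ : ℝ≥0∞) ^ k := ENNReal.tsum_mul_left
    _ ≤ a n * 2 := mul_le_mul_right geom_aux _
    _ = 2 * a n := mul_comm _ _

lemma construct {X : Type*} [MeasurableSpace X] (μ : Measure X)
    (hsmall : ∀ ε : ℝ≥0∞, 0 < ε → ∃ E : Set X, MeasurableSet E ∧ 0 < μ E ∧ μ E < ε) :
    ∃ (F : ℕ → Set X) (c : ℕ → ℝ≥0∞),
      (∀ n, MeasurableSet (F n)) ∧
      (∀ n m, n ≠ m → ∀ y, y ∈ F n → y ∉ F m) ∧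
      (∀ n, c n ≠ 0) ∧ (∀ n, c n ≠ ⊤) ∧
      (∀ n, c n * μ (F n) = ((n : ℝ≥0∞) + 1)⁻¹) ∧
      Monotone c ∧
      (∀ t : ℝ≥0∞, t ≠ ⊤ → ∃ n, t < c n) ∧
      (∀ n, μ (⋃ k, F (n + k)) ≤ 4 * μ (F n)) := by
  classical
  obtain ⟨A, hAm, hA0, hAt, h4⟩ := exists_seq μ hsmall
  set a : ℕ → ℝ≥0∞ := fun n => μ (A n) with ha
  have htail := tail_aux (a := a) h4
  set F : ℕ → Set X := fun n => A n \ ⋃ k, A (n + 1 + k) with hF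
  set f : ℕ → ℝ≥0∞ := fun n => μ (F n) with hf
  have hFm : ∀ n, MeasurableSet (F n) :=
    fun n => (hAm n).diff (MeasurableSet.iUnion fun k => hAm _)
  have hFsubA : ∀ n, F n ⊆ A n := fun n => diff_subset
  have hFnotA : ∀ n m, n < m → ∀ y, y ∈ F n → y ∉ A m := by
    intro n m hnm y hy hym
    exact hy.2 (mem_iUnion.2 ⟨m - n - 1, by rw [show n+1+(m-n-1) = m by omega]; exact hym⟩)
  have hdisj : ∀ n m, n ≠ m → ∀ y, y ∈ F n → y ∉ F m := by
    intro n m hnm y hy hym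
    rcases lt_or_gt_of_ne hnm with h | h
    · exact hFnotA n m h y hy (hFsubA m hym)
    · exact hFnotA m n h y hym (hFsubA n hy)
  have hfa : ∀ n, f n ≤ a n := fun n => measure_mono (hFsubA n)
  have htailm : ∀ n, μ (⋃ k, A (n + k)) ≤ 2 * a n :=
    fun n => (measure_iUnion_le _).trans (htail n)
  have hflow : ∀ n, a n ≤ 2 * f n := by
    intro n
    have h2 : 2 * a (n+1) ≤ a n / 2 := by
      rw [ENNReal.le_div_iff_mul_le (Or.inl (by norm_num)) (Or.inl (by norm_num))]
      calc 2 * a (n+1) * 2 = 4 * a (n+1) := by ring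
        _ ≤ a n := h4 n
    have h3 : a n ≤ f n + a n / 2 := by
      have hsub : A n ⊆ F n ∪ ⋃ k, A (n+1+k) := by
        intro y hy
        by_cases h : y ∈ ⋃ k, A (n+1+k)
        · exact Or.inr h
        · exact Or.inl ⟨hy, h⟩
      calc a n ≤ μ (F n ∪ ⋃ k, A (n+1+k)) := measure_mono hsub
        _ ≤ f n + μ (⋃ k, A ((n+1) + k)) := measure_union_le _ _
        _ ≤ f n + 2 * a (n+1) := add_le_add_right (htailm (n+1)) _
        _ ≤ f n + a n / 2 := add_le_add_right h2 _
    have h4' : a n / 2 ≤ f n := by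
      have h5 : a n - a n / 2 ≤ f n := tsub_le_iff_right.2 h3
      rwa [ENNReal.sub_half (hAt n).ne] at h5
    calc a n = 2 * (a n / 2) := by
          rw [ENNReal.mul_div_cancel (by norm_num) (by norm_num)]
      _ ≤ 2 * f n := mul_le_mul_right h4' _
  have hf0 : ∀ n, f n ≠ 0 := by
    intro n h
    have := hflow n
    rw [h, mul_zero] at this
    exact (hA0 n).ne' (le_antisymm this zero_le)
  have hft : ∀ n, f n ≠ ⊤ := fun n => ((hfa n).trans_lt (hAt n)).ne
  set w : ℕ → ℝ≥0∞ := fun n => ((n : ℝ≥0∞) + 1) * f n with hw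
  have hw0 : ∀ n, w n ≠ 0 := fun n => mul_ne_zero (by simp) (hf0 n)
  have hwt : ∀ n, w n ≠ ⊤ := fun n =>
    ENNReal.mul_ne_top (by simp [ENNReal.add_ne_top]) (hft n)
  set c : ℕ → ℝ≥0∞ := fun n => (w n)⁻¹ with hc
  have hc0 : ∀ n, c n ≠ 0 := fun n => ENNReal.inv_ne_zero.2 (hwt n)
  have hct : ∀ n, c n ≠ ⊤ := fun n => ENNReal.inv_ne_top.2 (hw0 n)
  have hcf : ∀ n, c n * f n = ((n : ℝ≥0∞) + 1)⁻¹ := by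
    intro n
    rw [hc]
    simp only []
    rw [hw]
    simp only []
    rw [ENNReal.mul_inv (Or.inl (by simp)) (Or.inl (by simp [ENNReal.add_ne_top])),
      mul_assoc, ENNReal.inv_mul_cancel (hf0 n) (hft n), mul_one]
  have h2f : ∀ n, 2 * f (n+1) ≤ f n := by
    intro n
    have h1 : 2 * (2 * f (n+1)) ≤ 2 * f n := by
      calc 2 * (2 * f (n+1)) = 4 * f (n+1) := by ring
        _ ≤ 4 * a (n+1) := mul_le_mul_right (hfa (n+1)) _
        _ ≤ a n := h4 n
        _ ≤ 2 * f n := hflow n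
    exact (ENNReal.mul_le_mul_iff_right (by norm_num) (by norm_num)).1 h1
  have hwanti : ∀ n, w (n+1) ≤ w n := by
    intro n
    have hcast : ((n+1 : ℕ) : ℝ≥0∞) + 1 ≤ 2 * ((n : ℝ≥0∞) + 1) := by
      push_cast
      rw [two_mul]
      exact add_le_add_right (by simp) _
    calc w (n+1) = (((n+1 : ℕ) : ℝ≥0∞) + 1) * f (n+1) := rfl
      _ ≤ 2 * ((n : ℝ≥0∞) + 1) * f (n+1) := mul_le_mul_left hcast _
      _ = ((n : ℝ≥0∞) + 1) * (2 * f (n+1)) := by ring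
      _ ≤ ((n : ℝ≥0∞) + 1) * f n := mul_le_mul_right (h2f n) _
  have hcmono : Monotone c :=
    monotone_nat_of_le_succ fun n => ENNReal.inv_le_inv' (hwanti n)
  have hdecay : ∀ n, a n ≤ a 0 * 4⁻¹ ^ n := by
    intro n
    have hdec : ∀ m k, a (m + k) ≤ a m * 4⁻¹ ^ k := by
      intro m k
      induction k with
      | zero => simp
      | succ k ih =>
        have h1 : a (m + (k+1)) ≤ a (m + k) * 4⁻¹ := by
          rw [← show ((m+k)+1) = m + (k+1) by omega]
          have := h4 (m + k)
          rw [mul_comm] at this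
          exact ((ENNReal.le_div_iff_mul_le (Or.inl (by norm_num))
            (Or.inl (by norm_num))).2 this).trans_eq (by rw [div_eq_mul_inv])
        calc a (m + (k+1)) ≤ a (m + k) * 4⁻¹ := h1
          _ ≤ a m * 4⁻¹ ^ k * 4⁻¹ := mul_le_mul_left ih _
          _ = a m * 4⁻¹ ^ (k+1) := by rw [mul_assoc, ← pow_succ]
    simpa using hdec 0 n
  have hunbdd : ∀ t : ℝ≥0∞, t ≠ ⊤ → ∃ n, t < c n := by
    intro t ht
    set M : ℝ≥0∞ := 2 * a 0 with hM
    have hM0 : M ≠ 0 := mul_ne_zero (by norm_num) (hA0 0).ne'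
    have hMt : M ≠ ⊤ := ENNReal.mul_ne_top (by norm_num) (hAt 0).ne
    have hwbd : ∀ n, w n ≤ M * 2⁻¹ ^ n := by
      intro n
      have h41 : (4 : ℝ≥0∞)⁻¹ = 2⁻¹ * 2⁻¹ := by
        rw [← ENNReal.mul_inv (Or.inl (by norm_num)) (Or.inl (by norm_num))]
        norm_num
      have hnk : ((n : ℝ≥0∞) + 1) * 2⁻¹ ^ n ≤ 2 := by
        rw [← ENNReal.inv_pow, ← div_eq_mul_inv,
          ENNReal.div_le_iff (by positivity) (by simp)]
        calc ((n : ℝ≥0∞) + 1) = ((n + 1 : ℕ) : ℝ≥0∞) := by push_cast; ring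
          _ ≤ ((2 ^ (n+1) : ℕ) : ℝ≥0∞) := by
              have h : n + 1 ≤ 2 ^ (n + 1) := (n.lt_two_pow_self).trans_le (Nat.pow_le_pow_right (by norm_num) (by omega))
              exact_mod_cast h
          _ = 2 * 2 ^ n := by push_cast; ring
      calc w n = ((n : ℝ≥0∞) + 1) * f n := rfl
        _ ≤ ((n : ℝ≥0∞) + 1) * (a 0 * 4⁻¹ ^ n) :=
            mul_le_mul_right ((hfa n).trans (hdecay n)) _
        _ = a 0 * (((n : ℝ≥0∞) + 1) * (2⁻¹ ^ n * 2⁻¹ ^ n)) := by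
            rw [h41, mul_pow]; ring
        _ ≤ a 0 * (2 * 2⁻¹ ^ n) := by
            refine mul_le_mul_right ?_ _
            calc ((n : ℝ≥0∞) + 1) * (2⁻¹ ^ n * 2⁻¹ ^ n)
                = (((n : ℝ≥0∞) + 1) * 2⁻¹ ^ n) * 2⁻¹ ^ n := by ring
              _ ≤ 2 * 2⁻¹ ^ n := mul_le_mul_left hnk _
        _ = M * 2⁻¹ ^ n := by rw [hM]; ring
    have htinv : t⁻¹ ≠ 0 := ENNReal.inv_ne_zero.2 ht
    have hr0 : (0 : ℝ≥0∞) < t⁻¹ / M := ENNReal.div_pos htinv hMt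
    obtain ⟨n, hn⟩ := ENNReal.exists_inv_two_pow_lt hr0.ne'
    refine ⟨n, ?_⟩
    have hwlt : w n < t⁻¹ := by
      calc w n ≤ M * 2⁻¹ ^ n := hwbd n
        _ < M * (t⁻¹ / M) := by
            exact (ENNReal.mul_lt_mul_iff_right hM0 hMt).2 (by simpa [ENNReal.inv_pow] using hn)
        _ ≤ t⁻¹ := ENNReal.mul_div_le
    have := ENNReal.lt_inv_iff_lt_inv.2 hwlt
    exact this
  have hFtail : ∀ n, μ (⋃ k, F (n + k)) ≤ 4 * μ (F n) := by
    intro n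
    calc μ (⋃ k, F (n + k)) ≤ μ (⋃ k, A (n + k)) :=
        measure_mono (iUnion_mono fun k => hFsubA (n + k))
      _ ≤ 2 * a n := htailm n
      _ ≤ 2 * (2 * f n) := mul_le_mul_right (hflow n) _
      _ = 4 * f n := by ring
  exact ⟨F, c, hFm, hdisj, hc0, hct, hcf, hcmono, hunbdd, hFtail⟩

lemma harm_aux : (∑' n : ℕ, ((n : ℝ≥0∞) + 1)⁻¹) = ⊤ := by
  by_contra h
  have h1 : ∀ n : ℕ, ((n : ℝ≥0∞) + 1)⁻¹ = (↑(((n : ℝ≥0) + 1)⁻¹) : ℝ≥0∞) := by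
    intro n
    rw [ENNReal.coe_inv (by positivity)]
    push_cast
    ring_nf
  rw [tsum_congr h1] at h
  have h2 := ENNReal.tsum_coe_ne_top_iff_summable.1 h
  have h3 : Summable (fun n : ℕ => ((n : ℝ) + 1)⁻¹) := by
    have h4 := NNReal.summable_coe.2 h2
    refine h4.congr fun n => ?_
    push_cast
    rfl
  have h5 : Summable (fun n : ℕ => (((n + 1 : ℕ) : ℝ))⁻¹) := by
    refine h3.congr fun n => ?_
    push_cast
    rfl
  exact Real.not_summable_natCast_inv ((summable_nat_add_iff 1).1 h5)

lemma sum_aux {qr : ℝ} (h : 1 < qr) :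
    (∑' n : ℕ, (4 * ((n : ℝ≥0∞) + 1)⁻¹) ^ qr) ≠ ⊤ := by
  have hterm : ∀ n : ℕ, (4 * ((n : ℝ≥0∞) + 1)⁻¹) ^ qr
      = 4 ^ qr * (((n : ℝ≥0∞) + 1)⁻¹) ^ qr := fun n =>
    ENNReal.mul_rpow_of_nonneg _ _ (by linarith)
  rw [tsum_congr hterm, ENNReal.tsum_mul_left]
  refine ENNReal.mul_ne_top (ENNReal.rpow_ne_top_of_nonneg (by linarith) (by norm_num)) ?_
  have hterm2 : ∀ n : ℕ, (((n : ℝ≥0∞) + 1)⁻¹) ^ qr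
      = ENNReal.ofReal (((n : ℝ) + 1)⁻¹ ^ qr) := by
    intro n
    rw [← ENNReal.ofReal_rpow_of_nonneg (by positivity) (by linarith)]
    congr 1
    rw [ENNReal.ofReal_inv_of_pos (by positivity)]
    congr 1
    rw [ENNReal.ofReal_add (by positivity) zero_le_one, ENNReal.ofReal_natCast,
      ENNReal.ofReal_one]
  rw [tsum_congr hterm2]
  have hsummable : Summable (fun n : ℕ => ((n : ℝ) + 1)⁻¹ ^ qr) := by
    have h1 : Summable (fun n : ℕ => ((n : ℝ) ^ qr)⁻¹) := Real.summable_nat_rpow_inv.2 h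
    have h2 := (summable_nat_add_iff 1).2 h1
    refine h2.congr fun n => ?_
    rw [← Real.inv_rpow (by positivity)]
    push_cast
    rfl
  rw [← ENNReal.ofReal_tsum_of_nonneg (fun n => by positivity) hsummable]
  exact ENNReal.ofReal_ne_top

end Aux

open Set in
open scoped NNReal in
theorem stmt_15 {X : Type*} [MetricSpace X] [MeasurableSpace X]
    (μ : Measure X) (h0 : 0 < μ Set.univ) (hfin : μ Set.univ < ⊤)
    (hsmall : ∀ ε : ℝ≥0∞, 0 < ε → ∃ E : Set X, MeasurableSet E ∧ 0 < μ E ∧ μ E < ε)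
    (q : ℝ≥0∞) (hq : 1 < q) :
    ∃ g : X → ℝ, Measurable g ∧ lorentzNorm μ 1 q g < ⊤ ∧ ∀ x, cMax μ g x = ⊤ := by
  classical
  obtain ⟨F, c, hFm, hdisj, hc0, hct, hcf, hcmono, hunbdd, hFtail⟩ := construct μ hsmall
  set G : X → ℝ≥0∞ := fun y => ∑' n, (F n).indicator (fun _ => c n) y with hG
  have hGmeas : Measurable G :=
    Measurable.ennreal_tsum fun n => measurable_const.indicator (hFm n)
  have hGmem : ∀ n y, y ∈ F n → G y = c n := by
    intro n y hy
    rw [hG]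
    simp only []
    rw [tsum_eq_single n (fun m hm => indicator_of_notMem (fun hym =>
      hdisj n m (Ne.symm hm) y hy hym) _)]
    exact indicator_of_mem hy _
  have hGnot : ∀ y, y ∉ (⋃ n, F n) → G y = 0 := by
    intro y hy
    rw [hG]
    simp only []
    rw [ENNReal.tsum_eq_zero]
    intro n
    exact indicator_of_notMem (fun h => hy (mem_iUnion.2 ⟨n, h⟩)) _
  have hGne : ∀ y, G y ≠ ⊤ := by
    intro y
    by_cases hy : y ∈ ⋃ n, F n
    · obtain ⟨n, hn⟩ := mem_iUnion.1 hy
      rw [hGmem n y hn]; exact hct n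
    · rw [hGnot y hy]; exact ENNReal.zero_ne_top
  set g : X → ℝ := fun y => (G y).toReal with hg
  have hgmeas : Measurable g := hGmeas.ennreal_toReal
  have hofg : ∀ y, ENNReal.ofReal |g y| = G y := by
    intro y
    rw [hg]
    simp only []
    rw [abs_of_nonneg ENNReal.toReal_nonneg, ENNReal.ofReal_toReal (hGne y)]
  set v : ℕ → ℝ := fun n => (c n).toReal with hv
  set u : ℕ → ℝ := fun n => Nat.casesOn n 0 (fun k => v k) with hu
  have hu0 : u 0 = 0 := rfl
  have hus : ∀ n, u (n + 1) = v n := fun n => rfl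
  have hvnonneg : ∀ n, 0 ≤ v n := fun n => ENNReal.toReal_nonneg
  have hvmono : Monotone v := fun a b hab => ENNReal.toReal_mono (hct b) (hcmono hab)
  have hunonneg : ∀ n, 0 ≤ u n := by
    intro n
    cases n with
    | zero => exact le_refl 0
    | succ k => exact hvnonneg k
  -- distribution bound on band
  have hDband : ∀ n (t : ℝ), u n ≤ t → t < v n → μ {x | t < |g x|} ≤ 4 * μ (F n) := by
    intro n t h1 h2
    have ht0 : 0 ≤ t := (hunonneg n).trans h1
    have hlt : ∀ m, m < n → v m ≤ t := by
      intro m hm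
      have : v m ≤ u n := by
        cases n with
        | zero => omega
        | succ k => exact hvmono (by omega)
      linarith
    have hsub : {x | t < |g x|} ⊆ ⋃ k, F (n + k) := by
      intro x hx
      simp only [mem_setOf_eq] at hx
      by_cases hxu : x ∈ ⋃ m, F m
      · obtain ⟨m, hm⟩ := mem_iUnion.1 hxu
        have hgx : |g x| = v m := by
          rw [hg]; simp only []
          rw [abs_of_nonneg ENNReal.toReal_nonneg, hGmem m x hm]
        have htv : t < v m := hgx ▸ hx
        have hnm : ¬ m < n := fun h => absurd htv (not_lt.2 (hlt m h))
        exact mem_iUnion.2 ⟨m - n, by rw [show n + (m - n) = m by omega]; exact hm⟩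
      · exfalso
        rw [hg] at hx
        simp only [] at hx
        rw [hGnot x hxu] at hx
        simp at hx
        linarith
    exact (measure_mono hsub).trans (hFtail n)
  -- band existence
  have hband : ∀ t : ℝ, 0 < t → ∃ n, u n ≤ t ∧ t < v n := by
    intro t ht
    have hex : ∃ n, t < u (n + 1) := by
      obtain ⟨n, hn⟩ := hunbdd (ENNReal.ofReal t) ENNReal.ofReal_ne_top
      exact ⟨n, (ENNReal.ofReal_lt_iff_lt_toReal ht.le (hct n)).1 hn⟩
    set n0 := Nat.find hex with hn0
    refine ⟨n0, ?_, Nat.find_spec hex⟩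
    match hmm : n0 with
    | 0 => exact hu0 ▸ ht.le
    | k + 1 =>
      have := Nat.find_min hex (m := k) (by omega)
      exact not_lt.1 this
  -- key pointwise bound
  have hkey : ∀ n (t : ℝ), u n ≤ t → t < v n →
      ENNReal.ofReal t * μ {x | t < |g x|} ≤ 4 * ((n : ℝ≥0∞) + 1)⁻¹ := by
    intro n t h1 h2
    have ht0 : 0 ≤ t := (hunonneg n).trans h1
    have hoc : ENNReal.ofReal t ≤ c n :=
      ((ENNReal.ofReal_lt_iff_lt_toReal ht0 (hct n)).2 h2).le
    calc ENNReal.ofReal t * μ {x | t < |g x|} ≤ c n * (4 * μ (F n)) :=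
        mul_le_mul' hoc (hDband n t h1 h2)
      _ = 4 * (c n * μ (F n)) := by ring
      _ = 4 * ((n : ℝ≥0∞) + 1)⁻¹ := by rw [hcf n]
  refine ⟨g, hgmeas, ?_, ?_⟩
  · -- Lorentz norm finite
    by_cases hqt : q = ⊤
    · rw [lorentzNorm, if_pos hqt]
      refine lt_of_le_of_lt (iSup_le fun t => iSup_le fun ht => ?_)
        (show (4 : ℝ≥0∞) < ⊤ by norm_num)
      obtain ⟨n, hn1, hn2⟩ := hband t ht
      calc ENNReal.ofReal t * μ {x | t < |g x|} ^ (1 / (1:ℝ))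
          = ENNReal.ofReal t * μ {x | t < |g x|} := by
            rw [show (1:ℝ)/1 = 1 by norm_num, ENNReal.rpow_one]
        _ ≤ 4 * ((n : ℝ≥0∞) + 1)⁻¹ := hkey n t hn1 hn2
        _ ≤ 4 * 1 := mul_le_mul_right (ENNReal.inv_le_one.2 (by simp)) _
        _ = 4 := mul_one 4
    · rw [lorentzNorm, if_neg hqt]
      set qr := q.toReal with hqr
      have hqr1 : 1 < qr := by
        rw [hqr, ← ENNReal.toReal_one]
        exact (ENNReal.toReal_lt_toReal ENNReal.one_ne_top hqt).2 hq
      have hIbound : (∫⁻ t in Set.Ioi (0 : ℝ),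
          (ENNReal.ofReal t * μ {x | t < |g x|} ^ (1 / (1:ℝ))) ^ qr /
            ENNReal.ofReal t) ≠ ⊤ := by
        have h11 : (1:ℝ)/1 = 1 := by norm_num
        simp only [h11, ENNReal.rpow_one]
        set h : ℝ → ℝ≥0∞ := fun t =>
          (ENNReal.ofReal t * μ {x | t < |g x|}) ^ qr / ENNReal.ofReal t with hh
        set K : ℕ → Set ℝ := fun n => Ico (u n) (u (n + 1)) with hK
        have hIoisub : Ioi (0 : ℝ) ⊆ ⋃ n, K n := by
          intro t ht
          obtain ⟨n, h1, h2⟩ := hband t ht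
          exact mem_iUnion.2 ⟨n, h1, h2⟩
        have hInt : ∀ n, (∫⁻ t in K n, h t) ≤ (4 * ((n : ℝ≥0∞) + 1)⁻¹) ^ qr := by
          intro n
          have hptwise : ∀ t ∈ K n, h t ≤ c n ^ (qr - 1) * (4 * μ (F n)) ^ qr := by
            intro t htK
            obtain ⟨htl, htr⟩ := htK
            have ht0 : 0 ≤ t := (hunonneg n).trans htl
            rcases eq_or_lt_of_le ht0 with ht | ht
            · rw [hh]
              simp only []
              rw [← ht]
              simp only [ENNReal.ofReal_zero, zero_mul]
              rw [ENNReal.zero_rpow_of_pos (by linarith), ENNReal.zero_div]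
              exact zero_le
            · have hx0 : ENNReal.ofReal t ≠ 0 := by
                simp [ENNReal.ofReal_eq_zero]; linarith
              have hxt : ENNReal.ofReal t ≠ ⊤ := ENNReal.ofReal_ne_top
              have hd : μ {x | t < |g x|} ≤ 4 * μ (F n) := hDband n t htl htr
              have hoc : ENNReal.ofReal t ≤ c n :=
                ((ENNReal.ofReal_lt_iff_lt_toReal ht0 (hct n)).2 htr).le
              calc h t = (ENNReal.ofReal t * μ {x | t < |g x|}) ^ qr /
                    ENNReal.ofReal t := rfl
                _ ≤ (ENNReal.ofReal t * (4 * μ (F n))) ^ qr / ENNReal.ofReal t := by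
                    gcongr
                _ = (ENNReal.ofReal t) ^ qr * (4 * μ (F n)) ^ qr / ENNReal.ofReal t := by
                    rw [ENNReal.mul_rpow_of_nonneg _ _ (by linarith)]
                _ = ((ENNReal.ofReal t) ^ qr / ENNReal.ofReal t) * (4 * μ (F n)) ^ qr := by
                    rw [div_eq_mul_inv, div_eq_mul_inv]; ring
                _ = (ENNReal.ofReal t) ^ (qr - 1) * (4 * μ (F n)) ^ qr := by
                    rw [ENNReal.rpow_sub _ _ hx0 hxt, ENNReal.rpow_one]
                _ ≤ c n ^ (qr - 1) * (4 * μ (F n)) ^ qr :=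
                    mul_le_mul_left (ENNReal.rpow_le_rpow hoc (by linarith)) _
          calc (∫⁻ t in K n, h t)
              ≤ ∫⁻ _ in K n, c n ^ (qr - 1) * (4 * μ (F n)) ^ qr :=
                setLIntegral_mono measurable_const hptwise
            _ = c n ^ (qr - 1) * (4 * μ (F n)) ^ qr * volume (K n) :=
                setLIntegral_const _ _
            _ ≤ c n ^ (qr - 1) * (4 * μ (F n)) ^ qr * c n := by
                refine mul_le_mul_right ?_ _
                calc volume (K n) = ENNReal.ofReal (u (n+1) - u n) := Real.volume_Ico
                  _ ≤ ENNReal.ofReal (u (n+1)) :=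
                      ENNReal.ofReal_le_ofReal (by linarith [hunonneg n])
                  _ ≤ c n := ENNReal.ofReal_toReal_le
            _ = (c n * (4 * μ (F n))) ^ qr := by
                have hcc : c n ^ (qr - 1) * c n = c n ^ qr := by
                  nth_rewrite 2 [← ENNReal.rpow_one (c n)]
                  rw [← ENNReal.rpow_add _ _ (hc0 n) (hct n)]
                  norm_num
                rw [ENNReal.mul_rpow_of_nonneg (c n) (4 * μ (F n)) (by linarith : (0:ℝ) ≤ qr), ← hcc]
                ring
            _ = (4 * ((n : ℝ≥0∞) + 1)⁻¹) ^ qr := by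
                rw [mul_left_comm, hcf n]
        have hchain : (∫⁻ t in Set.Ioi (0 : ℝ), h t) ≤
            ∑' n : ℕ, (4 * ((n : ℝ≥0∞) + 1)⁻¹) ^ qr := by
          calc (∫⁻ t in Set.Ioi (0 : ℝ), h t) ≤ ∫⁻ t in ⋃ n, K n, h t :=
              lintegral_mono_set hIoisub
            _ ≤ ∑' n : ℕ, ∫⁻ t in K n, h t := lintegral_iUnion_le _ _
            _ ≤ ∑' n : ℕ, (4 * ((n : ℝ≥0∞) + 1)⁻¹) ^ qr := ENNReal.tsum_le_tsum hInt
        exact (hchain.trans_lt (lt_top_iff_ne_top.2 (sum_aux hqr1))).ne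
      rw [ENNReal.ofReal_one, ENNReal.one_rpow, one_mul]
      exact ENNReal.rpow_lt_top_of_nonneg (by positivity) hIbound
  · -- maximal function infinite
    intro x
    have hSF : IsFiniteMeasure μ := ⟨hfin⟩
    have hGint : (∫⁻ y, G y ∂μ) = ⊤ := by
      rw [hG]
      simp only []
      rw [lintegral_tsum (fun n => (measurable_const.indicator (hFm n)).aemeasurable)]
      calc (∑' n, ∫⁻ y, (F n).indicator (fun _ => c n) y ∂μ)
          = ∑' n : ℕ, ((n : ℝ≥0∞) + 1)⁻¹ := by
            refine tsum_congr fun n => ?_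
            rw [lintegral_indicator (hFm n), setLIntegral_const, hcf n]
        _ = ⊤ := harm_aux
    set ν := μ.withDensity G with hν
    have hνball : (⨆ n : ℕ, ν (Metric.ball x ((n : ℝ) + 1))) = ⊤ := by
      have hmono : Monotone (fun n : ℕ => Metric.ball x ((n : ℝ) + 1)) := by
        intro a b hab
        apply Metric.ball_subset_ball
        have h := (Nat.cast_le (α := ℝ)).2 hab
        linarith
      rw [← hmono.measure_iUnion]
      have huniv : (⋃ n : ℕ, Metric.ball x ((n : ℝ) + 1)) = univ := by
        ext y
        simp only [mem_iUnion, Metric.mem_ball, mem_univ, iff_true]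
        obtain ⟨n, hn⟩ := exists_nat_gt (dist y x)
        exact ⟨n, by linarith⟩
      rw [huniv, hν, withDensity_apply' _ univ, setLIntegral_univ]
      exact hGint
    have hkey2 : ∀ n : ℕ, (μ univ)⁻¹ * ν (Metric.ball x ((n : ℝ) + 1)) ≤ cMax μ g x := by
      intro n
      set B := Metric.ball x ((n : ℝ) + 1) with hB
      have hνB : ν B = ∫⁻ y in B, ENNReal.ofReal |g y| ∂μ := by
        rw [hν, withDensity_apply' _ B]
        exact (lintegral_congr fun y => (hofg y)).symm
      by_cases hb : μ B = 0
      · have : ν B = 0 := by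
          rw [hν, withDensity_apply' _ B]
          exact setLIntegral_measure_zero _ _ hb
        rw [this, mul_zero]
        exact zero_le
      · have hb0 : 0 < μ B := pos_iff_ne_zero.2 hb
        have hbt : μ B < ⊤ := (measure_mono (subset_univ _)).trans_lt hfin
        have hle : (μ univ)⁻¹ * ν B ≤ (μ B)⁻¹ * ν B :=
          mul_le_mul_left (ENNReal.inv_le_inv' (measure_mono (subset_univ _))) _
        refine hle.trans ?_
        rw [cMax]
        refine le_iSup_of_le ((n : ℝ) + 1) ?_
        refine le_iSup_of_le (by positivity) ?_
        refine le_iSup_of_le hb0 ?_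
        refine le_iSup_of_le hbt ?_
        rw [hνB]
    have htop : (⨆ n : ℕ, (μ univ)⁻¹ * ν (Metric.ball x ((n : ℝ) + 1))) = ⊤ := by
      rw [← ENNReal.mul_iSup, hνball, ENNReal.mul_top (ENNReal.inv_ne_zero.2 hfin.ne)]
    refine top_unique ?_
    calc (⊤ : ℝ≥0∞) = ⨆ n : ℕ, (μ univ)⁻¹ * ν (Metric.ball x ((n : ℝ) + 1)) := htop.symm
      _ ≤ cMax μ g x := iSup_le hkey2
end
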